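/- arXiv:2404.09639 — 5 statements merged into one kernel-verified Lean document; each statement's English description precedes it below -/
import Mathlib

section
/- (Fibring corollary.) For independent random variables R₁, R₂, R₃, R₄ taking values in 𝔽₂ⁿ: d[R₁; R₃] + d[R₂; R₄] = d[R₁+R₂; R₃+R₄] + d[R₁ | R₁+R₂ ; R₃ | R₃+R₄] + I(R₁+R₂ : R₁+R₃ | R₁+R₂+R₃+R₄). -/
open scoped BigOperators Pointwise Classical

noncomputable section

/-- `𝔽₂ⁿ`, the `n`-dimensional vector space over the field with two elements. -/
abbrev F2 (n : ℕ) : Type := Fin n → ZMod 2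

/-- `f` is a probability distribution on the finite type `α`. -/
def IsDist {α : Type*} [Fintype α] (f : α → ℝ) : Prop :=
  (∀ x, 0 ≤ f x) ∧ ∑ x, f x = 1

/-- Shannon entropy (base 2) of a distribution on a finite type. -/
def ent {α : Type*} [Fintype α] (f : α → ℝ) : ℝ :=
  ∑ x, -(f x * Real.logb 2 (f x))

/-- Distribution of `X + Y` for independent `X ∼ f`, `Y ∼ g`. -/
def addDist {α : Type*} [Fintype α] [AddGroup α] (f g : α → ℝ) : α → ℝ :=
  fun s => ∑ x, f x * g (s - x)

/-- Distribution of `X - Y` for independent `X ∼ f`, `Y ∼ g`. -/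
def subDist {α : Type*} [Fintype α] [AddGroup α] (f g : α → ℝ) : α → ℝ :=
  fun s => ∑ x, f x * g (x - s)

/-- Entropic Ruzsa distance `d[X;Y] = H(X' + Y') - (H(X) + H(Y))/2` (in `𝔽₂ⁿ`
addition coincides with subtraction). -/
def rdist {α : Type*} [Fintype α] [AddGroup α] (f g : α → ℝ) : ℝ :=
  ent (addDist f g) - (ent f + ent g) / 2

/-- Entropic Ruzsa distance `d[X;Y] = H(X' - Y') - (H(X) + H(Y))/2` in a general group. -/
def rdistSub {α : Type*} [Fintype α] [AddGroup α] (f g : α → ℝ) : ℝ :=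
  ent (subDist f g) - (ent f + ent g) / 2

/-- Pushforward of a distribution along a map. -/
def pmap {α β : Type*} [Fintype α] (h : α → β) (π : α → ℝ) : β → ℝ :=
  fun b => ∑ a, if h a = b then π a else 0

/-- First marginal of a joint distribution. -/
def margFst {α γ : Type*} [Fintype γ] (π : α × γ → ℝ) : α → ℝ :=
  fun a => ∑ z, π (a, z)

/-- Second marginal of a joint distribution. -/
def margSnd {α γ : Type*} [Fintype α] (π : α × γ → ℝ) : γ → ℝ :=
  fun z => ∑ a, π (a, z)

/-- Conditional distribution of the first coordinate given that the second equals `z`. -/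
def condDist {α γ : Type*} [Fintype α] (π : α × γ → ℝ) (z : γ) : α → ℝ :=
  fun a => π (a, z) / margSnd π z

/-- Conditional entropy `H(X | Z) = E_{z ∼ Z} H(X |_{Z = z})`. -/
def condEnt {α γ : Type*} [Fintype α] [Fintype γ] (π : α × γ → ℝ) : ℝ :=
  ∑ z, margSnd π z * ent (condDist π z)

/-- Mutual information `I(X : Y) = H(X) + H(Y) - H(X, Y)`. -/
def mutInfo {α β : Type*} [Fintype α] [Fintype β] (π : α × β → ℝ) : ℝ :=
  ent (margFst π) + ent (margSnd π) - ent π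

/-- Conditional mutual information `I(X : Y | Z) = E_{z ∼ Z} I(X|_{Z=z} : Y|_{Z=z})`. -/
def condMutInfo {α β γ : Type*} [Fintype α] [Fintype β] [Fintype γ]
    (π : (α × β) × γ → ℝ) : ℝ :=
  ∑ z, margSnd π z * mutInfo (condDist π z)

/-- Conditioned Ruzsa distance `d[(X;Y) | Z] = E_{z ∼ Z} d[X|_{Z=z} ; Y|_{Z=z}]`, where
inside the expectation the two conditioned variables are treated as independent. -/
def condRdist {α γ : Type*} [Fintype α] [Fintype γ] [AddGroup α]
    (π : (α × α) × γ → ℝ) : ℝ :=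
  ∑ z, margSnd π z * rdist (pmap Prod.fst (condDist π z)) (pmap Prod.snd (condDist π z))

/-- Doubly conditioned Ruzsa distance `d[X | Z ; Y | W] = E_{z,w} d[X|_{Z=z} ; Y|_{W=w}]`
for `(X,Z)` independent of `(Y,W)`. -/
def condRdist2 {α γ δ : Type*} [Fintype α] [Fintype γ] [Fintype δ] [AddGroup α]
    (π : α × γ → ℝ) (ρ : α × δ → ℝ) : ℝ :=
  ∑ z, ∑ w, margSnd π z * margSnd ρ w * rdist (condDist π z) (condDist ρ w)

/-- The uniform distribution on a finite set `A`. -/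
def unifFin {α : Type*} [Fintype α] (A : Finset α) : α → ℝ :=
  fun x => if x ∈ A then (A.card : ℝ)⁻¹ else 0

/-- The uniform distribution on a set `S`. -/
def unifSet {α : Type*} [Fintype α] (S : Set α) : α → ℝ :=
  fun x => if x ∈ S then (Nat.card S : ℝ)⁻¹ else 0

/-- Kullback–Leibler divergence (base-2 logarithm), with value `⊤` if the support of `f`
is not contained in the support of `g`. -/
def KL {α : Type*} [Fintype α] (f g : α → ℝ) : EReal :=
  if ∀ x, g x = 0 → f x = 0 then
    ((∑ x, f x * Real.logb 2 (f x / g x) : ℝ) : EReal)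
  else ⊤

/-- `τ⁻(X) := inf_T D_KL(X ‖ U_A + T)`, the infimum over all `𝔽₂ⁿ`-valued random
variables `T` independent of `U_A`. -/
def tauMinus {n : ℕ} (A : Finset (F2 n)) (f : F2 n → ℝ) : EReal :=
  ⨅ t : {t : F2 n → ℝ // IsDist t}, KL f (addDist (unifFin A) t.1)

/-- `τ⁺(X) := τ⁻(X) + H(X) - H(U_A)`. -/
def tauPlus {n : ℕ} (A : Finset (F2 n)) (f : F2 n → ℝ) : EReal :=
  tauMinus A f + ((ent f - ent (unifFin A) : ℝ) : EReal)
namespace StmtAux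

def L (x : ℝ) : ℝ := -(x * Real.logb 2 x)

lemma L_zero : L 0 = 0 := by simp [L]

lemma L_mul (x y : ℝ) : L (x * y) = x * L y + y * L x := by
  rcases eq_or_ne x 0 with rfl | hx
  · simp [L]
  rcases eq_or_ne y 0 with rfl | hy
  · simp [L]
  simp only [L, Real.logb, Real.log_mul hx hy]
  ring

lemma ent_eq {α : Type*} [Fintype α] (f : α → ℝ) : ent f = ∑ x, L (f x) := rfl

lemma ent_prod {α β : Type*} [Fintype α] [Fintype β] (f : α → ℝ) (g : β → ℝ)
    (hf : ∑ x, f x = 1) (hg : ∑ x, g x = 1) :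
    ent (fun p : α × β => f p.1 * g p.2) = ent f + ent g := by
  rw [show ent (fun p : α × β => f p.1 * g p.2)
      = ∑ a, ∑ b, (f a * L (g b) + g b * L (f a)) from by
    rw [ent_eq, Fintype.sum_prod_type]
    exact Finset.sum_congr rfl fun a _ => Finset.sum_congr rfl fun b _ => L_mul _ _]
  simp only [Finset.sum_add_distrib, ← Finset.mul_sum, ← Finset.sum_mul, hf, hg,
    ent_eq, one_mul, mul_one]
  ring

lemma pmap_equiv {α β : Type*} [Fintype α] (e : α ≃ β) (π : α → ℝ) :
    pmap e π = fun b => π (e.symm b) := by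
  funext b
  unfold pmap
  simp only [show ∀ a : α, (e a = b) = (a = e.symm b) from fun a =>
    propext ⟨fun h => by simp [← h], fun h => by simp [h]⟩,
    Finset.sum_ite_eq', Finset.mem_univ, if_true]

lemma ent_pmap_equiv {α β : Type*} [Fintype α] [Fintype β] (e : α ≃ β) (π : α → ℝ) :
    ent (pmap e π) = ent π := by
  rw [pmap_equiv]
  simp only [ent_eq]
  exact Fintype.sum_equiv e.symm _ _ (fun b => rfl)

lemma pmap_comp {α β γ : Type*} [Fintype α] [Fintype β] (h : α → β) (k : β → γ) (π : α → ℝ) :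
    pmap (k ∘ h) π = pmap k (pmap h π) := by
  funext c
  unfold pmap
  rw [Finset.sum_congr rfl (fun m _ => show
      (if k m = c then ∑ a, (if h a = m then π a else 0) else 0)
      = ∑ a, if k m = c then (if h a = m then π a else 0) else 0 from by
    split_ifs <;> simp)]
  rw [Finset.sum_comm]
  refine Finset.sum_congr rfl fun a _ => ?_
  rw [Finset.sum_congr rfl (fun m _ => show
      (if k m = c then (if h a = m then π a else 0) else 0)
      = if m = h a then (if k m = c then π a else 0) else 0 from by
    rcases eq_or_ne m (h a) with rfl | hm
    · simp
    · simp [hm, Ne.symm hm])]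
  rw [Finset.sum_ite_eq']
  simp

lemma pmap_fst {α γ : Type*} [Fintype α] [Fintype γ] (π : α × γ → ℝ) :
    pmap Prod.fst π = margFst π := by
  funext a
  unfold pmap margFst
  rw [Fintype.sum_prod_type]
  rw [Finset.sum_congr rfl (fun x _ => show
      (∑ y, if x = a then π (x, y) else 0) = if x = a then ∑ y, π (x, y) else 0 from by
    split_ifs <;> simp)]
  rw [Finset.sum_ite_eq']
  simp

lemma chain {α γ : Type*} [Fintype α] [Fintype γ] (π : α × γ → ℝ) (hπ : ∀ p, 0 ≤ π p) :
    condEnt π = ent π - ent (margSnd π) := by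
  have key : ∀ z, margSnd π z * ent (condDist π z) =
      (∑ a, L (π (a, z))) - L (margSnd π z) := by
    intro z
    rcases eq_or_ne (margSnd π z) 0 with hz | hz
    · have hall : ∀ a, π (a, z) = 0 := by
        intro a
        have := Finset.sum_eq_zero_iff_of_nonneg (fun a _ => hπ (a, z)) |>.mp hz
        exact this a (Finset.mem_univ a)
      simp [hz, hall, L_zero]
    · have hc : ∀ a, π (a, z) = margSnd π z * condDist π z a := by
        intro a
        rw [condDist, mul_div_cancel₀]
        exact hz
      have hs : ∑ a, condDist π z a = 1 := by
        unfold condDist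
        rw [← Finset.sum_div]
        exact div_self hz
      calc margSnd π z * ent (condDist π z)
          = ∑ a, (margSnd π z * L (condDist π z a) + condDist π z a * L (margSnd π z)) - L (margSnd π z) := by
            rw [Finset.sum_add_distrib, ← Finset.mul_sum, ← Finset.sum_mul, hs, ent_eq]
            ring
        _ = (∑ a, L (π (a, z))) - L (margSnd π z) := by
            congr 1
            exact Finset.sum_congr rfl fun a _ => by rw [hc a, L_mul]
  unfold condEnt
  rw [Finset.sum_congr rfl fun z _ => key z]
  rw [Finset.sum_sub_distrib]
  rw [ent_eq π, Fintype.sum_prod_type_right, ent_eq]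

end StmtAux
namespace StmtAux

variable {G : Type*} [Fintype G] [AddCommGroup G]

def shear (G : Type*) [AddCommGroup G] : G × G ≃ G × G where
  toFun p := (p.1, p.1 + p.2)
  invFun p := (p.1, p.2 - p.1)
  left_inv p := by simp
  right_inv p := by simp

lemma pmap_shear (f g : G → ℝ) :
    pmap (fun p : G × G => (p.1, p.1 + p.2)) (fun p => f p.1 * g p.2)
      = fun p : G × G => f p.1 * g (p.2 - p.1) := by
  rw [show (fun p : G × G => (p.1, p.1 + p.2)) = ⇑(shear G) from rfl, pmap_equiv]
  rfl

lemma sum_addDist (f g : G → ℝ) :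
    ∑ s, addDist f g s = (∑ x, f x) * (∑ x, g x) := by
  unfold addDist
  rw [Finset.sum_comm]
  rw [Finset.sum_congr rfl (fun x _ => by
    rw [← Finset.mul_sum,
      Fintype.sum_equiv (Equiv.subRight x) (fun s => g (s - x)) g (fun s => rfl)])]
  rw [← Finset.sum_mul]

lemma ent_shear (f g : G → ℝ) (hf : ∑ x, f x = 1) (hg : ∑ x, g x = 1) :
    ent (fun p : G × G => f p.1 * g (p.2 - p.1)) = ent f + ent g := by
  rw [← pmap_shear, show (fun p : G × G => (p.1, p.1 + p.2)) = ⇑(shear G) from rfl,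
    ent_pmap_equiv, ent_prod f g hf hg]

lemma addDist_nonneg {f g : G → ℝ} (hf : ∀ x, 0 ≤ f x) (hg : ∀ x, 0 ≤ g x) :
    ∀ s, 0 ≤ addDist f g s :=
  fun _ => Finset.sum_nonneg fun x _ => mul_nonneg (hf x) (hg _)

def Qd (r1 r2 r3 r4 : G → ℝ) : G × (G × G) → ℝ :=
  fun p => ∑ a, (r1 a * r2 (p.2.1 - a)) * (r3 (p.1 - a) * r4 (p.2.2 - (p.1 - a)))

lemma Qd_margSnd (r1 r2 r3 r4 : G → ℝ) :
    margSnd (Qd r1 r2 r3 r4) = fun z : G × G => addDist r1 r2 z.1 * addDist r3 r4 z.2 := by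
  funext z
  unfold margSnd Qd
  rw [Finset.sum_comm]
  rw [Finset.sum_congr rfl (fun a _ => show
      (∑ u, (r1 a * r2 (z.1 - a)) * (r3 (u - a) * r4 (z.2 - (u - a))))
        = (r1 a * r2 (z.1 - a)) * addDist r3 r4 z.2 from by
    rw [← Finset.mul_sum]
    congr 1
    exact Fintype.sum_equiv (Equiv.subRight a)
      (fun u => r3 (u - a) * r4 (z.2 - (u - a))) (fun c => r3 c * r4 (z.2 - c))
      (fun u => rfl))]
  rw [← Finset.sum_mul]
  rfl

def tEquiv (G : Type*) [AddCommGroup G] : (G × (G × G)) ≃ ((G × G) × G) where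
  toFun p := ((p.2.1, p.1), p.2.1 + p.2.2)
  invFun w := (w.1.2, (w.1.1, w.2 - w.1.1))
  left_inv p := by simp
  right_inv w := by simp

def bigEquiv (G : Type*) [AddCommGroup G] : ((G × G) × (G × G)) ≃ (((G × G) × G) × G) where
  toFun q := (((q.1.1 + q.1.2, q.1.1 + q.2.1), q.1.1 + q.1.2 + q.2.1 + q.2.2), q.1.1)
  invFun w := ((w.2, w.1.1.1 - w.2), (w.1.1.2 - w.2, w.1.2 - w.1.1.1 - (w.1.1.2 - w.2)))
  left_inv q := by
    obtain ⟨⟨a, b⟩, ⟨c, d⟩⟩ := q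
    simp only [Prod.mk.injEq]
    refine ⟨⟨trivial, by abel⟩, by abel, by abel⟩
  right_inv w := by
    obtain ⟨⟨⟨x, y⟩, z⟩, a⟩ := w
    simp only [Prod.mk.injEq]
    refine ⟨⟨⟨by abel, by abel⟩, by abel⟩, trivial⟩

lemma piPrime_eq (r1 r2 r3 r4 : G → ℝ) :
    pmap (fun q : (G × G) × (G × G) =>
        ((q.1.1 + q.1.2, q.1.1 + q.2.1), q.1.1 + q.1.2 + q.2.1 + q.2.2))
      (fun q => r1 q.1.1 * r2 q.1.2 * r3 q.2.1 * r4 q.2.2)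
    = fun w : (G × G) × G => Qd r1 r2 r3 r4 (w.1.2, (w.1.1, w.2 - w.1.1)) := by
  rw [show (fun q : (G × G) × (G × G) =>
        ((q.1.1 + q.1.2, q.1.1 + q.2.1), q.1.1 + q.1.2 + q.2.1 + q.2.2))
      = Prod.fst ∘ ⇑(bigEquiv G) from rfl]
  rw [pmap_comp, pmap_equiv, pmap_fst]
  funext w
  obtain ⟨⟨s, u⟩, v⟩ := w
  show (∑ a, r1 a * r2 (s - a) * r3 (u - a) * r4 (v - s - (u - a)))
      = ∑ a, (r1 a * r2 (s - a)) * (r3 (u - a) * r4 (v - s - (u - a)))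
  exact Finset.sum_congr rfl fun a _ => by ring

end StmtAux

/-- Fibring corollary: for independent `R₁, R₂, R₃, R₄` on `𝔽₂ⁿ`,
`d[R₁;R₃] + d[R₂;R₄] = d[R₁+R₂;R₃+R₄] + d[R₁|R₁+R₂ ; R₃|R₃+R₄]
  + I(R₁+R₂ : R₁+R₃ | R₁+R₂+R₃+R₄)`.
Independence is encoded by taking the joint distribution of `(R₁,R₂,R₃,R₄)` to be the
product `r₁ × r₂ × r₃ × r₄` of the individual distributions. -/
theorem stmt_2 (n : ℕ) (r1 r2 r3 r4 : F2 n → ℝ)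
    (h1 : IsDist r1) (h2 : IsDist r2) (h3 : IsDist r3) (h4 : IsDist r4) :
    rdist r1 r3 + rdist r2 r4 =
      rdist (addDist r1 r2) (addDist r3 r4)
      + condRdist2
          (pmap (fun p : F2 n × F2 n => (p.1, p.1 + p.2)) (fun p => r1 p.1 * r2 p.2))
          (pmap (fun p : F2 n × F2 n => (p.1, p.1 + p.2)) (fun p => r3 p.1 * r4 p.2))
      + condMutInfo
          (pmap (fun q : (F2 n × F2 n) × (F2 n × F2 n) =>
              ((q.1.1 + q.1.2, q.1.1 + q.2.1), q.1.1 + q.1.2 + q.2.1 + q.2.2))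
            (fun q => r1 q.1.1 * r2 q.1.2 * r3 q.2.1 * r4 q.2.2)) := by
  obtain ⟨h1n, h1s⟩ := h1
  obtain ⟨h2n, h2s⟩ := h2
  obtain ⟨h3n, h3s⟩ := h3
  obtain ⟨h4n, h4s⟩ := h4
  rw [StmtAux.pmap_shear r1 r2, StmtAux.pmap_shear r3 r4, StmtAux.piPrime_eq r1 r2 r3 r4]
  set π : F2 n × F2 n → ℝ := fun p => r1 p.1 * r2 (p.2 - p.1) with hπdef
  set ρ : F2 n × F2 n → ℝ := fun p => r3 p.1 * r4 (p.2 - p.1) with hρdef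
  set Q : F2 n × (F2 n × F2 n) → ℝ := StmtAux.Qd r1 r2 r3 r4 with hQdef
  set π' : (F2 n × F2 n) × F2 n → ℝ := fun w => Q (w.1.2, (w.1.1, w.2 - w.1.1)) with hπ'def
  set πSV : F2 n × F2 n → ℝ := fun p => addDist r1 r2 p.1 * addDist r3 r4 (p.2 - p.1) with hSVdef
  set πUV : F2 n × F2 n → ℝ := fun p => addDist r1 r3 p.1 * addDist r2 r4 (p.2 - p.1) with hUVdef
  -- basic facts
  have hπnn : ∀ p, 0 ≤ π p := fun p => mul_nonneg (h1n _) (h2n _)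
  have hρnn : ∀ p, 0 ≤ ρ p := fun p => mul_nonneg (h3n _) (h4n _)
  have hQnn : ∀ p, 0 ≤ Q p := fun p => Finset.sum_nonneg fun a _ =>
    mul_nonneg (mul_nonneg (h1n _) (h2n _)) (mul_nonneg (h3n _) (h4n _))
  have hπ'nn : ∀ w, 0 ≤ π' w := fun w => hQnn _
  have hSnn : ∀ s, 0 ≤ addDist r1 r2 s := StmtAux.addDist_nonneg h1n h2n
  have hTnn : ∀ s, 0 ≤ addDist r3 r4 s := StmtAux.addDist_nonneg h3n h4n
  have hUnn : ∀ s, 0 ≤ addDist r1 r3 s := StmtAux.addDist_nonneg h1n h3n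
  have hWnn : ∀ s, 0 ≤ addDist r2 r4 s := StmtAux.addDist_nonneg h2n h4n
  have hSsum : ∑ s, addDist r1 r2 s = 1 := by rw [StmtAux.sum_addDist, h1s, h2s, one_mul]
  have hTsum : ∑ s, addDist r3 r4 s = 1 := by rw [StmtAux.sum_addDist, h3s, h4s, one_mul]
  have hUsum : ∑ s, addDist r1 r3 s = 1 := by rw [StmtAux.sum_addDist, h1s, h3s, one_mul]
  have hWsum : ∑ s, addDist r2 r4 s = 1 := by rw [StmtAux.sum_addDist, h2s, h4s, one_mul]
  have hmπ : margSnd π = addDist r1 r2 := rfl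
  have hmρ : margSnd ρ = addDist r3 r4 := rfl
  have hQm : margSnd Q = fun z : F2 n × F2 n => addDist r1 r2 z.1 * addDist r3 r4 z.2 :=
    StmtAux.Qd_margSnd r1 r2 r3 r4
  -- conditional entropies via chain rule
  have hcπ : condEnt π = ent r1 + ent r2 - ent (addDist r1 r2) := by
    rw [StmtAux.chain π hπnn, hmπ, show ent π = ent r1 + ent r2 from
      StmtAux.ent_shear r1 r2 h1s h2s]
  have hcρ : condEnt ρ = ent r3 + ent r4 - ent (addDist r3 r4) := by
    rw [StmtAux.chain ρ hρnn, hmρ, show ent ρ = ent r3 + ent r4 from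
      StmtAux.ent_shear r3 r4 h3s h4s]
  have hcQ : condEnt Q = ent Q - (ent (addDist r1 r2) + ent (addDist r3 r4)) := by
    rw [StmtAux.chain Q hQnn, hQm,
      StmtAux.ent_prod (addDist r1 r2) (addDist r3 r4) hSsum hTsum]
  -- key pointwise identity for the conditioned Ruzsa distance
  have hF4 : ∀ s t, margSnd π s * margSnd ρ t * ent (addDist (condDist π s) (condDist ρ t))
      = margSnd Q (s, t) * ent (condDist Q (s, t)) := by
    intro s t
    have hm : margSnd Q (s, t) = margSnd π s * margSnd ρ t := by rw [hQm, hmπ, hmρ]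
    rcases eq_or_ne (margSnd π s * margSnd ρ t) 0 with h0 | h0
    · rw [hm, h0, zero_mul, zero_mul]
    · have hcd : condDist Q (s, t) = addDist (condDist π s) (condDist ρ t) := by
        funext u
        show Q (u, (s, t)) / margSnd Q (s, t) = ∑ x, condDist π s x * condDist ρ t (u - x)
        rw [hm]
        rw [show (∑ x, condDist π s x * condDist ρ t (u - x))
            = (∑ x, π (x, s) * ρ (u - x, t)) / (margSnd π s * margSnd ρ t) from by
          rw [Finset.sum_div]
          exact Finset.sum_congr rfl fun x _ => div_mul_div_comm _ _ _ _]
        rfl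
      rw [hcd, hm]
  -- the conditioned Ruzsa distance term
  have hA : condEnt Q = ∑ s, ∑ t, margSnd Q (s, t) * ent (condDist Q (s, t)) :=
    Fintype.sum_prod_type (fun z : F2 n × F2 n => margSnd Q z * ent (condDist Q z))
  have hB : ∑ s, ∑ t, margSnd ρ t * (margSnd π s * ent (condDist π s)) = condEnt π := by
    rw [Finset.sum_comm]
    rw [Finset.sum_congr rfl (fun t _ => by rw [← Finset.mul_sum])]
    rw [← Finset.sum_mul, hmρ, hTsum, one_mul]
    rfl
  have hC : ∑ s, ∑ t, margSnd π s * (margSnd ρ t * ent (condDist ρ t)) = condEnt ρ := by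
    rw [Finset.sum_congr rfl (fun s _ => by rw [← Finset.mul_sum])]
    rw [← Finset.sum_mul, hmπ, hSsum, one_mul]
    rfl
  have hD : condRdist2 π ρ = condEnt Q - condEnt π / 2 - condEnt ρ / 2 := by
    unfold condRdist2
    rw [Finset.sum_congr rfl fun s _ => Finset.sum_congr rfl fun t _ => show
        margSnd π s * margSnd ρ t * rdist (condDist π s) (condDist ρ t)
        = margSnd Q (s, t) * ent (condDist Q (s, t))
          - (margSnd ρ t * (margSnd π s * ent (condDist π s))
            + margSnd π s * (margSnd ρ t * ent (condDist ρ t))) / 2 from by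
      rw [show rdist (condDist π s) (condDist ρ t)
          = ent (addDist (condDist π s) (condDist ρ t))
            - (ent (condDist π s) + ent (condDist ρ t)) / 2 from rfl]
      rw [← hF4 s t]
      ring]
    simp only [Finset.sum_sub_distrib, Finset.sum_add_distrib, ← Finset.sum_div]
    rw [← hA, hB, hC]
    ring
  -- the conditional mutual information term
  have hSV : ∀ s v, (∑ u, π' ((s, u), v)) = πSV (s, v) := fun s v => congrFun hQm (s, v - s)
  have hUV : ∀ u v, (∑ s, π' ((s, u), v)) = πUV (u, v) := by
    intro u v
    show (∑ s, Q (u, (s, v - s))) = addDist r1 r3 u * addDist r2 r4 (v - u)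
    calc (∑ s, Q (u, (s, v - s)))
        = ∑ s, ∑ a, (r1 a * r3 (u - a)) * (r2 (s - a) * r4 (v - s - (u - a))) :=
          Finset.sum_congr rfl fun s _ => Finset.sum_congr rfl fun a _ => by
            show (r1 a * r2 (s - a)) * (r3 (u - a) * r4 (v - s - (u - a))) = _
            ring
      _ = ∑ a, ∑ s, (r1 a * r3 (u - a)) * (r2 (s - a) * r4 (v - s - (u - a))) :=
          Finset.sum_comm
      _ = ∑ a, (r1 a * r3 (u - a)) * addDist r2 r4 (v - u) :=
          Finset.sum_congr rfl fun a _ => by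
            rw [← Finset.mul_sum]
            congr 1
            exact Fintype.sum_equiv (Equiv.subRight a)
              (fun s => r2 (s - a) * r4 (v - s - (u - a)))
              (fun b => r2 b * r4 ((v - u) - b))
              (fun s => by
                show r2 (s - a) * r4 (v - s - (u - a))
                    = r2 (s - a) * r4 ((v - u) - (s - a))
                rw [show v - s - (u - a) = (v - u) - (s - a) from by abel])
      _ = addDist r1 r3 u * addDist r2 r4 (v - u) := by rw [← Finset.sum_mul]; rfl
  have hmπ' : margSnd π' = addDist (addDist r1 r2) (addDist r3 r4) := by
    funext v
    rw [show margSnd π' v = ∑ s, ∑ u, π' ((s, u), v) from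
      Fintype.sum_prod_type (fun p : F2 n × F2 n => π' (p, v))]
    rw [Finset.sum_congr rfl fun s _ => hSV s v]
    rfl
  have hmSV : margSnd πSV = margSnd π' := by
    funext v
    rw [hmπ']
    rfl
  have hmUV : margSnd πUV = margSnd π' := by
    funext v
    show (∑ u, πUV (u, v)) = margSnd π' v
    rw [Finset.sum_congr rfl fun u _ => (hUV u v).symm]
    rw [Finset.sum_comm]
    exact (show margSnd π' v = ∑ s, ∑ u, π' ((s, u), v) from
      Fintype.sum_prod_type (fun p : F2 n × F2 n => π' (p, v))).symm
  have hMFst : ∀ v, margFst (condDist π' v) = condDist πSV v := by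
    intro v
    funext s
    show (∑ u, π' ((s, u), v) / margSnd π' v) = πSV (s, v) / margSnd πSV v
    rw [hmSV, ← Finset.sum_div, hSV s v]
  have hMSnd : ∀ v, margSnd (condDist π' v) = condDist πUV v := by
    intro v
    funext u
    show (∑ s, π' ((s, u), v) / margSnd π' v) = πUV (u, v) / margSnd πUV v
    rw [hmUV, ← Finset.sum_div, hUV u v]
  have hE : condMutInfo π' = condEnt πSV + condEnt πUV - condEnt π' := by
    unfold condMutInfo condEnt
    rw [Finset.sum_congr rfl fun v _ => show margSnd π' v * mutInfo (condDist π' v)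
        = margSnd πSV v * ent (condDist πSV v) + margSnd πUV v * ent (condDist πUV v)
          - margSnd π' v * ent (condDist π' v) from by
      rw [show mutInfo (condDist π' v)
          = ent (margFst (condDist π' v)) + ent (margSnd (condDist π' v))
            - ent (condDist π' v) from rfl]
      rw [hMFst v, hMSnd v, hmSV, hmUV]
      ring]
    simp only [Finset.sum_sub_distrib, Finset.sum_add_distrib]
  have hcSV : condEnt πSV = (ent (addDist r1 r2) + ent (addDist r3 r4))
      - ent (addDist (addDist r1 r2) (addDist r3 r4)) := by
    rw [StmtAux.chain πSV (fun p => mul_nonneg (hSnn _) (hTnn _)), hmSV, hmπ']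
    congr 1
    exact StmtAux.ent_shear _ _ hSsum hTsum
  have hcUV : condEnt πUV = (ent (addDist r1 r3) + ent (addDist r2 r4))
      - ent (addDist (addDist r1 r2) (addDist r3 r4)) := by
    rw [StmtAux.chain πUV (fun p => mul_nonneg (hUnn _) (hWnn _)), hmUV, hmπ']
    congr 1
    exact StmtAux.ent_shear _ _ hUsum hWsum
  have hentπ' : ent π' = ent Q := by
    rw [show π' = pmap (⇑(StmtAux.tEquiv (F2 n))) Q from by
      rw [StmtAux.pmap_equiv]; rfl]
    exact StmtAux.ent_pmap_equiv _ _
  have hcπ' : condEnt π' = ent Q - ent (addDist (addDist r1 r2) (addDist r3 r4)) := by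
    rw [StmtAux.chain π' hπ'nn, hmπ', hentπ']
  -- assemble
  rw [hD, hE]
  rw [show rdist r1 r3 = ent (addDist r1 r3) - (ent r1 + ent r3) / 2 from rfl,
    show rdist r2 r4 = ent (addDist r2 r4) - (ent r2 + ent r4) / 2 from rfl,
    show rdist (addDist r1 r2) (addDist r3 r4)
      = ent (addDist (addDist r1 r2) (addDist r3 r4))
        - (ent (addDist r1 r2) + ent (addDist r3 r4)) / 2 from rfl]
  linarith [hcπ, hcρ, hcQ, hcSV, hcUV, hcπ']
end
end

section
/- Let X, Y be random variables on 𝔽₂ⁿ, let X₁, X₂ be independent copies of X and Y₁, Y₂ independent copies of Y, with X₁, X₂, Y₁, Y₂ mutually independent. Set T = X₁+Y₁, V = X₁+Y₂, W = X₁+X₂, S = X₁+X₂+Y₁+Y₂, and define I₁ = I(T : V | S) and I₂ = I(T : W | S). Then d[X;X] + d[Y;Y] = 2·d[X;Y] + (I₂ − I₁). -/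
open scoped BigOperators Pointwise Classical

noncomputable section

/-- The sample space for `(X₁, X₂, Y₁, Y₂)`. -/
abbrev Quad (n : ℕ) : Type := (F2 n × F2 n) × (F2 n × F2 n)

/-- Joint distribution of `(X₁, X₂, Y₁, Y₂)` where `X₁, X₂ ∼ f` and `Y₁, Y₂ ∼ g`
are mutually independent. -/
def jointXY {n : ℕ} (f g : F2 n → ℝ) : Quad n → ℝ :=
  fun q => f q.1.1 * f q.1.2 * g q.2.1 * g q.2.2

/-- `T = X₁ + Y₁`. -/
def Tv {n : ℕ} (q : Quad n) : F2 n := q.1.1 + q.2.1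
/-- `T̄ = X₂ + Y₂`. -/
def Tb {n : ℕ} (q : Quad n) : F2 n := q.1.2 + q.2.2
/-- `V = X₁ + Y₂`. -/
def Vv {n : ℕ} (q : Quad n) : F2 n := q.1.1 + q.2.2
/-- `V̄ = X₂ + Y₁`. -/
def Vb {n : ℕ} (q : Quad n) : F2 n := q.1.2 + q.2.1
/-- `W = X₁ + X₂`. -/
def Wv {n : ℕ} (q : Quad n) : F2 n := q.1.1 + q.1.2
/-- `W̄ = Y₁ + Y₂`. -/
def Wb {n : ℕ} (q : Quad n) : F2 n := q.2.1 + q.2.2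
/-- `S = X₁ + X₂ + Y₁ + Y₂`. -/
def Sv {n : ℕ} (q : Quad n) : F2 n := q.1.1 + q.1.2 + q.2.1 + q.2.2

/-- `I₁ = I(T : V | S)`. -/
def I1 {n : ℕ} (f g : F2 n → ℝ) : ℝ :=
  condMutInfo (pmap (fun q : Quad n => ((Tv q, Vv q), Sv q)) (jointXY f g))

/-- `I₂ = I(T : W | S)`. -/
def I2 {n : ℕ} (f g : F2 n → ℝ) : ℝ :=
  condMutInfo (pmap (fun q : Quad n => ((Tv q, Wv q), Sv q)) (jointXY f g))

section AuxLemmas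

variable {α β γ δ : Type*}

lemma pmap_comp [Fintype α] [Fintype β] (h : α → β) (k : β → γ) (π : α → ℝ) :
    pmap k (pmap h π) = pmap (k ∘ h) π := by
  funext c
  have step : ∀ b : β, (if k b = c then ∑ a, (if h a = b then π a else 0) else 0)
      = ∑ a, (if k b = c then (if h a = b then π a else 0) else 0) := by
    intro b; split <;> simp
  simp only [pmap, step]
  rw [Finset.sum_comm]
  refine Finset.sum_congr rfl fun a _ => ?_
  rw [Finset.sum_eq_single (h a)]
  · simp [Function.comp]
  · intro b _ hb
    simp [Ne.symm hb]
  · simp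

lemma pmap_nonneg [Fintype α] (h : α → β) (π : α → ℝ) (hπ : ∀ a, 0 ≤ π a) :
    ∀ b, 0 ≤ pmap h π b := by
  intro b
  refine Finset.sum_nonneg fun a _ => ?_
  split
  · exact hπ a
  · exact le_rfl

lemma margSnd_eq_pmap [Fintype α] [Fintype γ] (ρ : α × γ → ℝ) :
    margSnd ρ = pmap Prod.snd ρ := by
  funext z
  unfold margSnd pmap
  conv_rhs => rw [Fintype.sum_prod_type]
  refine Finset.sum_congr rfl fun a _ => ?_
  rw [Finset.sum_eq_single z]
  · simp
  · intro z' _ hz'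
    simp [hz']
  · simp

lemma pmap_equiv [Fintype α] (e : α ≃ β) (π : α → ℝ) :
    pmap (⇑e) π = fun b => π (e.symm b) := by
  funext b
  unfold pmap
  rw [Finset.sum_eq_single (e.symm b)]
  · simp
  · intro a _ ha
    rw [if_neg]
    intro hcontra
    exact ha (by rw [← hcontra]; simp)
  · simp

lemma ent_pmap_equiv [Fintype α] [Fintype β] (e : α ≃ β) (π : α → ℝ) :
    ent (pmap (⇑e) π) = ent π := by
  rw [pmap_equiv]
  unfold ent
  exact (Fintype.sum_equiv e _ _ (fun a => by simp)).symm

lemma pmap_prodMap [Fintype α] [Fintype β] (u : α → γ) (v : β → δ) (μ : α → ℝ) (ν : β → ℝ) :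
    pmap (fun p : α × β => (u p.1, v p.2)) (fun p => μ p.1 * ν p.2)
      = fun c => pmap u μ c.1 * pmap v ν c.2 := by
  funext c
  obtain ⟨c1, c2⟩ := c
  simp only [pmap]
  rw [Fintype.sum_prod_type, Finset.sum_mul_sum]
  refine Finset.sum_congr rfl fun a _ => Finset.sum_congr rfl fun b _ => ?_
  simp only [Prod.mk.injEq, ite_and]
  split_ifs <;> simp

lemma pmap_addpair [Fintype α] [AddCommGroup α] (μ ν : α → ℝ) :
    pmap (fun p : α × α => p.1 + p.2) (fun p => μ p.1 * ν p.2) = addDist μ ν := by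
  funext s
  unfold pmap addDist
  rw [Fintype.sum_prod_type]
  refine Finset.sum_congr rfl fun a _ => ?_
  rw [Finset.sum_eq_single (s - a)]
  · simp
  · intro b _ hb
    rw [if_neg]
    intro hcontra
    exact hb (by rw [← hcontra, add_sub_cancel_left])
  · simp

lemma sum_addDist [Fintype α] [AddCommGroup α] (μ ν : α → ℝ) :
    ∑ s, addDist μ ν s = (∑ a, μ a) * (∑ a, ν a) := by
  unfold addDist
  rw [Finset.sum_comm, Finset.sum_mul]
  refine Finset.sum_congr rfl fun x _ => ?_
  rw [← Finset.mul_sum]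
  congr 1
  exact Fintype.sum_equiv (Equiv.subRight x) _ _ (fun s => rfl)

lemma ent_prod [Fintype α] [Fintype β] (μ : α → ℝ) (ν : β → ℝ)
    (hμ : ∑ a, μ a = 1) (hν : ∑ b, ν b = 1) :
    ent (fun p : α × β => μ p.1 * ν p.2) = ent μ + ent ν := by
  unfold ent
  rw [Fintype.sum_prod_type]
  have key : ∀ (a : α) (b : β), -(μ a * ν b * Real.logb 2 (μ a * ν b))
      = ν b * -(μ a * Real.logb 2 (μ a)) + μ a * -(ν b * Real.logb 2 (ν b)) := by
    intro a b
    by_cases h1 : μ a = 0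
    · simp [h1]
    by_cases h2 : ν b = 0
    · simp [h2]
    rw [Real.logb_mul h1 h2]; ring
  calc ∑ a, ∑ b, -(μ a * ν b * Real.logb 2 (μ a * ν b))
      = ∑ a, ((∑ b, ν b) * -(μ a * Real.logb 2 (μ a))
          + μ a * ∑ b, -(ν b * Real.logb 2 (ν b))) := by
        refine Finset.sum_congr rfl fun a _ => ?_
        simp only [key]
        rw [Finset.sum_add_distrib, ← Finset.sum_mul, ← Finset.mul_sum]
    _ = ∑ a, (-(μ a * Real.logb 2 (μ a)) + μ a * ∑ b, -(ν b * Real.logb 2 (ν b))) := by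
        simp only [hν, one_mul]
    _ = ∑ a, -(μ a * Real.logb 2 (μ a)) + (∑ a, μ a) * ∑ b, -(ν b * Real.logb 2 (ν b)) := by
        rw [Finset.sum_add_distrib, ← Finset.sum_mul]
    _ = _ := by rw [hμ, one_mul]

lemma condEnt_chain [Fintype α] [Fintype γ] (ρ : α × γ → ℝ) (hρ : ∀ p, 0 ≤ ρ p) :
    condEnt ρ = ent ρ - ent (margSnd ρ) := by
  have key : ∀ z, margSnd ρ z * ent (condDist ρ z)
      = (∑ a, -(ρ (a, z) * Real.logb 2 (ρ (a, z))))
        + margSnd ρ z * Real.logb 2 (margSnd ρ z) := by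
    intro z
    by_cases hm : margSnd ρ z = 0
    · have hz : ∀ a, ρ (a, z) = 0 := by
        intro a
        have h0 : ∑ a, ρ (a, z) = 0 := hm
        exact (Finset.sum_eq_zero_iff_of_nonneg (fun a _ => hρ _)).1 h0 a (Finset.mem_univ a)
      simp [hm, hz]
    · unfold ent condDist
      rw [Finset.mul_sum]
      have step : ∀ a, margSnd ρ z * -(ρ (a, z) / margSnd ρ z
            * Real.logb 2 (ρ (a, z) / margSnd ρ z))
          = -(ρ (a, z) * Real.logb 2 (ρ (a, z)))
            + ρ (a, z) * Real.logb 2 (margSnd ρ z) := by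
        intro a
        by_cases ha : ρ (a, z) = 0
        · simp [ha]
        · rw [Real.logb_div ha hm]
          field_simp
          ring
      simp only [step]
      rw [Finset.sum_add_distrib, ← Finset.sum_mul]
      rfl
  unfold condEnt
  simp only [key]
  rw [Finset.sum_add_distrib]
  have h1 : ∑ z, ∑ a, -(ρ (a, z) * Real.logb 2 (ρ (a, z))) = ent ρ := by
    unfold ent
    rw [Fintype.sum_prod_type, Finset.sum_comm]
  have h2 : ∑ z, margSnd ρ z * Real.logb 2 (margSnd ρ z) = - ent (margSnd ρ) := by
    unfold ent
    rw [← Finset.sum_neg_distrib]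
    exact Finset.sum_congr rfl fun z _ => by ring
  rw [h1, h2]; ring

lemma pmap_fst_apply [Fintype α] [Fintype β] [Fintype γ] (ρ : (α × β) × γ → ℝ) (a : α) (z : γ) :
    pmap (fun p : (α × β) × γ => (p.1.1, p.2)) ρ (a, z) = ∑ b, ρ ((a, b), z) := by
  unfold pmap
  rw [Fintype.sum_prod_type]
  have inner : ∀ ab : α × β, (∑ z', if ((ab.1, z') = (a, z)) then ρ (ab, z') else 0)
      = if ab.1 = a then ρ (ab, z) else 0 := by
    intro ab
    rw [Finset.sum_eq_single z]
    · simp [Prod.ext_iff]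
    · intro z' _ hz'
      simp [Prod.ext_iff, hz']
    · simp
  simp only [inner]
  rw [Fintype.sum_prod_type, Finset.sum_eq_single a]
  · simp
  · intro x _ hx
    simp [hx]
  · simp

lemma pmap_snd_apply [Fintype α] [Fintype β] [Fintype γ] (ρ : (α × β) × γ → ℝ) (b : β) (z : γ) :
    pmap (fun p : (α × β) × γ => (p.1.2, p.2)) ρ (b, z) = ∑ a, ρ ((a, b), z) := by
  unfold pmap
  rw [Fintype.sum_prod_type]
  have inner : ∀ ab : α × β, (∑ z', if ((ab.2, z') = (b, z)) then ρ (ab, z') else 0)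
      = if ab.2 = b then ρ (ab, z) else 0 := by
    intro ab
    rw [Finset.sum_eq_single z]
    · simp [Prod.ext_iff]
    · intro z' _ hz'
      simp [Prod.ext_iff, hz']
    · simp
  simp only [inner]
  rw [Fintype.sum_prod_type]
  refine Finset.sum_congr rfl fun x _ => ?_
  rw [Finset.sum_eq_single b]
  · simp
  · intro y _ hy
    simp [hy]
  · simp

lemma margSnd_pmap_fst [Fintype α] [Fintype β] [Fintype γ] (ρ : (α × β) × γ → ℝ) :
    margSnd (pmap (fun p : (α × β) × γ => (p.1.1, p.2)) ρ) = margSnd ρ := by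
  rw [margSnd_eq_pmap, pmap_comp, margSnd_eq_pmap]
  rfl

lemma margSnd_pmap_snd [Fintype α] [Fintype β] [Fintype γ] (ρ : (α × β) × γ → ℝ) :
    margSnd (pmap (fun p : (α × β) × γ => (p.1.2, p.2)) ρ) = margSnd ρ := by
  rw [margSnd_eq_pmap, pmap_comp, margSnd_eq_pmap]
  rfl

lemma margFst_condDist [Fintype α] [Fintype β] [Fintype γ] (ρ : (α × β) × γ → ℝ) (z : γ) :
    margFst (condDist ρ z) = condDist (pmap (fun p : (α × β) × γ => (p.1.1, p.2)) ρ) z := by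
  funext a
  unfold margFst condDist
  rw [margSnd_pmap_fst, pmap_fst_apply, Finset.sum_div]

lemma margSnd_condDist [Fintype α] [Fintype β] [Fintype γ] (ρ : (α × β) × γ → ℝ) (z : γ) :
    margSnd (condDist ρ z) = condDist (pmap (fun p : (α × β) × γ => (p.1.2, p.2)) ρ) z := by
  funext b
  unfold margSnd condDist
  rw [margSnd_pmap_snd, pmap_snd_apply, Finset.sum_div]

lemma condMutInfo_eq [Fintype α] [Fintype β] [Fintype γ] (ρ : (α × β) × γ → ℝ)
    (hρ : ∀ p, 0 ≤ ρ p) :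
    condMutInfo ρ
      = ent (pmap (fun p : (α × β) × γ => (p.1.1, p.2)) ρ)
        + ent (pmap (fun p : (α × β) × γ => (p.1.2, p.2)) ρ)
        - ent ρ - ent (margSnd ρ) := by
  have e1 := condEnt_chain (pmap (fun p : (α × β) × γ => (p.1.1, p.2)) ρ)
    (pmap_nonneg _ ρ hρ)
  have e2 := condEnt_chain (pmap (fun p : (α × β) × γ => (p.1.2, p.2)) ρ)
    (pmap_nonneg _ ρ hρ)
  have e0 := condEnt_chain ρ hρ
  have main : condMutInfo ρ
      = condEnt (pmap (fun p : (α × β) × γ => (p.1.1, p.2)) ρ)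
        + condEnt (pmap (fun p : (α × β) × γ => (p.1.2, p.2)) ρ) - condEnt ρ := by
    unfold condMutInfo condEnt mutInfo
    rw [margSnd_pmap_fst, margSnd_pmap_snd]
    rw [← Finset.sum_add_distrib, ← Finset.sum_sub_distrib]
    refine Finset.sum_congr rfl fun z _ => ?_
    rw [margFst_condDist ρ z, margSnd_condDist ρ z]
    ring
  rw [main, e1, e2, e0, margSnd_pmap_fst, margSnd_pmap_snd]
  ring

end AuxLemmas

section F2Aux

lemma zmod2_aux1 : ∀ x y z : ZMod 2, x + (x + y + z) + z = y := by decide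

lemma zmod2_aux2 : ∀ x y z w : ZMod 2, x + z + (x + w) + (x + y + z + w) = x + y := by decide

lemma F2_aux1 {n : ℕ} (x y z : F2 n) : x + (x + y + z) + z = y := by
  funext i
  simp only [Pi.add_apply]
  exact zmod2_aux1 _ _ _

lemma F2_aux2 {n : ℕ} (x y z w : F2 n) : x + z + (x + w) + (x + y + z + w) = x + y := by
  funext i
  simp only [Pi.add_apply]
  exact zmod2_aux2 _ _ _ _

/-- shear on a pair `(w, s) ↦ (w, w + s)`. -/
def shear2 (α : Type*) [AddGroup α] : α × α ≃ α × α where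
  toFun p := (p.1, p.1 + p.2)
  invFun p := (p.1, -p.1 + p.2)
  left_inv p := by simp
  right_inv p := by simp

/-- the char-2 shear `((t, v), s) ↦ ((t, t + v + s), s)`. -/
def shear3 (n : ℕ) : (F2 n × F2 n) × F2 n ≃ (F2 n × F2 n) × F2 n where
  toFun p := ((p.1.1, p.1.1 + p.1.2 + p.2), p.2)
  invFun p := ((p.1.1, p.1.1 + p.1.2 + p.2), p.2)
  left_inv p := by
    refine Prod.ext (Prod.ext rfl ?_) rfl
    exact F2_aux1 _ _ _
  right_inv p := by
    refine Prod.ext (Prod.ext rfl ?_) rfl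
    exact F2_aux1 _ _ _

/-- rearrangement `((x₁,x₂),(y₁,y₂)) ↦ ((x₁,y₂),(x₂,y₁))`. -/
def rearr (n : ℕ) : Quad n ≃ Quad n where
  toFun q := ((q.1.1, q.2.2), (q.1.2, q.2.1))
  invFun q := ((q.1.1, q.2.1), (q.2.2, q.1.2))
  left_inv q := rfl
  right_inv q := rfl

end F2Aux
/-- `d[X;X] + d[Y;Y] = 2·d[X;Y] + (I₂ − I₁)`. -/
theorem stmt_3 (n : ℕ) (f g : F2 n → ℝ) (hf : IsDist f) (hg : IsDist g) :
    rdist f f + rdist g g = 2 * rdist f g + (I2 f g - I1 f g) := by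
  classical
  obtain ⟨hf0, hf1⟩ := hf
  obtain ⟨hg0, hg1⟩ := hg
  have hπ0 : ∀ q : Quad n, 0 ≤ jointXY f g q := fun q =>
    mul_nonneg (mul_nonneg (mul_nonneg (hf0 _) (hf0 _)) (hg0 _)) (hg0 _)
  have hπprod : jointXY f g
      = fun q : Quad n => (f q.1.1 * f q.1.2) * (g q.2.1 * g q.2.2) := by
    funext q
    simp only [jointXY]
    ring
  -- expansion of I1 and I2 into joint entropies
  have hI1 : I1 f g
      = ent (pmap (fun q : Quad n => (Tv q, Sv q)) (jointXY f g))
        + ent (pmap (fun q : Quad n => (Vv q, Sv q)) (jointXY f g))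
        - ent (pmap (fun q : Quad n => ((Tv q, Vv q), Sv q)) (jointXY f g))
        - ent (pmap (fun q : Quad n => Sv q) (jointXY f g)) := by
    unfold I1
    rw [condMutInfo_eq _ (pmap_nonneg _ _ hπ0), pmap_comp, pmap_comp,
      margSnd_eq_pmap, pmap_comp]
    rfl
  have hI2 : I2 f g
      = ent (pmap (fun q : Quad n => (Tv q, Sv q)) (jointXY f g))
        + ent (pmap (fun q : Quad n => (Wv q, Sv q)) (jointXY f g))
        - ent (pmap (fun q : Quad n => ((Tv q, Wv q), Sv q)) (jointXY f g))
        - ent (pmap (fun q : Quad n => Sv q) (jointXY f g)) := by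
    unfold I2
    rw [condMutInfo_eq _ (pmap_nonneg _ _ hπ0), pmap_comp, pmap_comp,
      margSnd_eq_pmap, pmap_comp]
    rfl
  -- H(T,W,S) = H(T,V,S)
  have hTW : (fun q : Quad n => ((Tv q, Wv q), Sv q))
      = ⇑(shear3 n) ∘ (fun q : Quad n => ((Tv q, Vv q), Sv q)) := by
    funext q
    obtain ⟨⟨a, b⟩, c, d⟩ := q
    refine Prod.ext (Prod.ext rfl ?_) rfl
    exact (F2_aux2 a b c d).symm
  have E3 : ent (pmap (fun q : Quad n => ((Tv q, Wv q), Sv q)) (jointXY f g))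
      = ent (pmap (fun q : Quad n => ((Tv q, Vv q), Sv q)) (jointXY f g)) := by
    rw [hTW, ← pmap_comp, ent_pmap_equiv]
  -- H(W,S) = H(X₁+X₂) + H(Y₁+Y₂)
  have hWWb : pmap (fun q : Quad n => (Wv q, Wb q)) (jointXY f g)
      = fun c : F2 n × F2 n => addDist f f c.1 * addDist g g c.2 := by
    rw [hπprod]
    have h := pmap_prodMap (fun p : F2 n × F2 n => p.1 + p.2)
      (fun p : F2 n × F2 n => p.1 + p.2)
      (fun p : F2 n × F2 n => f p.1 * f p.2) (fun p : F2 n × F2 n => g p.1 * g p.2)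
    rw [pmap_addpair, pmap_addpair] at h
    exact h
  have hWS : ent (pmap (fun q : Quad n => (Wv q, Sv q)) (jointXY f g))
      = ent (addDist f f) + ent (addDist g g) := by
    have hcomp : (fun q : Quad n => (Wv q, Sv q))
        = ⇑(shear2 (F2 n)) ∘ (fun q : Quad n => (Wv q, Wb q)) := by
      funext q
      refine Prod.ext rfl ?_
      show Sv q = Wv q + Wb q
      unfold Sv Wv Wb
      abel
    rw [hcomp, ← pmap_comp, ent_pmap_equiv, hWWb]
    exact ent_prod _ _ (by rw [sum_addDist, hf1, one_mul]) (by rw [sum_addDist, hg1, one_mul])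
  -- H(V,S) = 2 H(X+Y)
  have hVVb : pmap (fun q : Quad n => (Vv q, Vb q)) (jointXY f g)
      = fun c : F2 n × F2 n => addDist f g c.1 * addDist f g c.2 := by
    have hcomp : (fun q : Quad n => (Vv q, Vb q))
        = (fun p : (F2 n × F2 n) × (F2 n × F2 n) => (p.1.1 + p.1.2, p.2.1 + p.2.2))
          ∘ ⇑(rearr n) := by
      funext q
      rfl
    rw [hcomp, ← pmap_comp, pmap_equiv]
    have hre : (fun b : (F2 n × F2 n) × (F2 n × F2 n) => jointXY f g ((rearr n).symm b))
        = fun p : (F2 n × F2 n) × (F2 n × F2 n) =>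
            (f p.1.1 * g p.1.2) * (f p.2.1 * g p.2.2) := by
      funext p
      simp only [rearr, Equiv.coe_fn_symm_mk, jointXY]
      ring
    rw [hre]
    have h := pmap_prodMap (fun p : F2 n × F2 n => p.1 + p.2)
      (fun p : F2 n × F2 n => p.1 + p.2)
      (fun p : F2 n × F2 n => f p.1 * g p.2) (fun p : F2 n × F2 n => f p.1 * g p.2)
    rw [pmap_addpair] at h
    exact h
  have hsumfg : ∑ s, addDist f g s = 1 := by rw [sum_addDist, hf1, hg1, one_mul]
  have hVS : ent (pmap (fun q : Quad n => (Vv q, Sv q)) (jointXY f g))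
      = 2 * ent (addDist f g) := by
    have hcomp : (fun q : Quad n => (Vv q, Sv q))
        = ⇑(shear2 (F2 n)) ∘ (fun q : Quad n => (Vv q, Vb q)) := by
      funext q
      refine Prod.ext rfl ?_
      show Sv q = Vv q + Vb q
      unfold Sv Vv Vb
      abel
    rw [hcomp, ← pmap_comp, ent_pmap_equiv, hVVb, ent_prod _ _ hsumfg hsumfg]
    ring
  have hdiff : I2 f g - I1 f g
      = ent (addDist f f) + ent (addDist g g) - 2 * ent (addDist f g) := by
    rw [hI1, hI2, E3, hWS, hVS]
    ring
  simp only [rdist]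
  rw [hdiff]
  ring

end
end

section
/- Fix a nonempty finite set A ⊆ 𝔽₂ⁿ. For a linear subspace V ⊆ 𝔽₂ⁿ, τ⁻(U_V) = log₂|A| − log₂(max_{t ∈ 𝔽₂ⁿ} |A ∩ (V+t)|). -/
open scoped BigOperators Pointwise Classical

noncomputable section

section AuxStmt12

open Real Set Pointwise

lemma F2.neg_self {n : ℕ} (a : F2 n) : -a = a := funext fun _ => CharTwo.neg_eq _

lemma F2.add_self {n : ℕ} (a : F2 n) : a + a = 0 := funext fun _ => CharTwo.add_self_eq_zero _

lemma aux_sum_if {α : Type*} [Fintype α] (p : α → Prop) [DecidablePred p] (c : ℝ) :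
    ∑ x, (if p x then c else 0) = ((Finset.univ.filter p).card : ℝ) * c := by
  rw [← Finset.sum_filter, Finset.sum_const, nsmul_eq_mul]

lemma aux_isDist_unifSet {α : Type*} [Fintype α] (S : Set α) (hS : S.Nonempty) :
    IsDist (unifSet S) := by
  have hcard : (Nat.card ↥S : ℕ) = (Finset.univ.filter (· ∈ S)).card := by
    rw [Nat.card_coe_set_eq, Set.ncard_eq_toFinset_card']
    congr 1
    ext x; simp
  have hpos : (0:ℝ) < (Nat.card ↥S : ℝ) := by
    have : Nonempty ↥S := hS.to_subtype
    exact_mod_cast Nat.card_pos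
  constructor
  · intro x
    unfold unifSet
    split_ifs
    · positivity
    · exact le_refl 0
  · unfold unifSet
    rw [aux_sum_if, ← hcard]
    exact mul_inv_cancel₀ hpos.ne'

lemma aux_count {n : ℕ} (A : Finset (F2 n)) (V : Submodule (ZMod 2) (F2 n)) (w : F2 n) :
    ((Finset.univ.filter (fun x => x ∈ A ∧ w + x ∈ (V : Set (F2 n)))).card
      = Nat.card ↥((A : Set (F2 n)) ∩ (w +ᵥ (V : Set (F2 n))))) := by
  rw [Nat.card_coe_set_eq, Set.ncard_eq_toFinset_card']
  congr 1
  ext x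
  simp only [Finset.mem_filter, Finset.mem_univ, true_and, Set.mem_toFinset, Set.mem_inter_iff,
    Finset.mem_coe, Set.mem_vadd_set_iff_neg_vadd_mem, vadd_eq_add, F2.neg_self]

end AuxStmt12

/-- for a nonempty finite `A ⊆ 𝔽₂ⁿ` and a linear subspace `V`,
`τ⁻(U_V) = log₂|A| − log₂(max_t |A ∩ (V+t)|)`. -/
theorem stmt_12 (n : ℕ) (A : Finset (F2 n)) (hA : A.Nonempty)
    (V : Submodule (ZMod 2) (F2 n)) :
    tauMinus A (unifSet (V : Set (F2 n)))
      = ((Real.logb 2 (A.card : ℝ)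
          - Real.logb 2 ((Finset.univ.sup fun t : F2 n =>
              Nat.card ↥((A : Set (F2 n)) ∩ (t +ᵥ (V : Set (F2 n)))) : ℕ) : ℝ) : ℝ)
        : EReal) := by
  classical
  obtain ⟨a, ha⟩ := hA
  set M : ℕ := Finset.univ.sup (fun t : F2 n =>
      Nat.card ↥((A : Set (F2 n)) ∩ (t +ᵥ (V : Set (F2 n))))) with hMdef
  set N : ℕ := Nat.card ↥(V : Set (F2 n)) with hNdef
  set Vf : Finset (F2 n) := Set.toFinset (V : Set (F2 n)) with hVfdef
  have memVf : ∀ x, x ∈ Vf ↔ x ∈ (V : Set (F2 n)) := fun x => Set.mem_toFinset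
  have hVs0 : (0 : F2 n) ∈ (V : Set (F2 n)) := V.zero_mem
  have hVfcard : Vf.card = N := by
    rw [hNdef, Nat.card_coe_set_eq, Set.ncard_eq_toFinset_card']
  have hNpos : 0 < N := by
    have : Nonempty ↥(V : Set (F2 n)) := ⟨⟨0, hVs0⟩⟩
    rw [hNdef]; exact Nat.card_pos
  have hMto : ∀ w : F2 n,
      (Finset.univ.filter (fun x => x ∈ A ∧ w + x ∈ (V : Set (F2 n)))).card ≤ M := by
    intro w
    rw [aux_count A V w, hMdef]
    exact Finset.le_sup (f := fun t : F2 n =>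
      Nat.card ↥((A : Set (F2 n)) ∩ (t +ᵥ (V : Set (F2 n))))) (Finset.mem_univ w)
  have hMpos : 0 < M := by
    have hmem : a ∈ (A : Set (F2 n)) ∩ (a +ᵥ (V : Set (F2 n))) := by
      refine ⟨ha, ?_⟩
      rw [Set.mem_vadd_set_iff_neg_vadd_mem, vadd_eq_add, F2.neg_self, F2.add_self]
      exact hVs0
    have h1 : 0 < Nat.card ↥((A : Set (F2 n)) ∩ (a +ᵥ (V : Set (F2 n)))) := by
      have : Nonempty ↥((A : Set (F2 n)) ∩ (a +ᵥ (V : Set (F2 n)))) := ⟨⟨a, hmem⟩⟩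
      exact Nat.card_pos
    exact lt_of_lt_of_le h1 (by
      rw [hMdef]
      exact Finset.le_sup (f := fun t : F2 n =>
        Nat.card ↥((A : Set (F2 n)) ∩ (t +ᵥ (V : Set (F2 n))))) (Finset.mem_univ a))
  have haR : (0:ℝ) < (A.card : ℝ) := by
    exact_mod_cast Finset.card_pos.mpr ⟨a, ha⟩
  have hNR : (0:ℝ) < (N : ℝ) := by exact_mod_cast hNpos
  have hMR : (0:ℝ) < (M : ℝ) := by exact_mod_cast hMpos
  have hmemequiv : ∀ t0 : F2 n, ∀ v ∈ (V : Set (F2 n)), ∀ x : F2 n,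
      (v - x ∈ t0 +ᵥ (V : Set (F2 n)) ↔ t0 + x ∈ (V : Set (F2 n))) := by
    intro t0 v hv x
    rw [Set.mem_vadd_set_iff_neg_vadd_mem, vadd_eq_add, F2.neg_self, sub_eq_add_neg,
      F2.neg_self, show t0 + (v + x) = v + (t0 + x) by abel]
    simp only [SetLike.mem_coe] at hv ⊢
    exact V.add_mem_iff_right hv
  have KLsum : ∀ g : F2 n → ℝ,
      (∑ x, unifSet (V : Set (F2 n)) x * Real.logb 2 (unifSet (V : Set (F2 n)) x / g x))
        = ∑ x ∈ Vf, ((N:ℝ)⁻¹ * Real.logb 2 ((N:ℝ)⁻¹ / g x)) := by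
    intro g
    rw [← Finset.sum_subset (Finset.subset_univ Vf) (fun x _ hx => by
      have hxV : x ∉ (V : Set (F2 n)) := fun h => hx ((memVf x).2 h)
      simp [unifSet, hxV])]
    refine Finset.sum_congr rfl fun x hx => ?_
    have hxV : x ∈ (V : Set (F2 n)) := (memVf x).1 hx
    simp only [unifSet, if_pos hxV, ← hNdef]
  refine le_antisymm ?_ ?_
  · -- upper bound: witness T = uniform on t0 + V
    obtain ⟨t0, -, ht0⟩ := Finset.exists_mem_eq_sup Finset.univ Finset.univ_nonempty
      (fun t : F2 n => Nat.card ↥((A : Set (F2 n)) ∩ (t +ᵥ (V : Set (F2 n)))))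
    rw [← hMdef] at ht0
    have hT0mem : t0 ∈ t0 +ᵥ (V : Set (F2 n)) := by
      rw [Set.mem_vadd_set_iff_neg_vadd_mem, vadd_eq_add, F2.neg_self, F2.add_self]
      exact hVs0
    have hcardT : ((Nat.card ↥(t0 +ᵥ (V : Set (F2 n)))) : ℝ) = (N : ℝ) := by
      have : Nat.card ↥(t0 +ᵥ (V : Set (F2 n))) = N := by
        rw [hNdef, Nat.card_coe_set_eq, Nat.card_coe_set_eq, Set.ncard_vadd_set]
      exact_mod_cast this
    set T : F2 n → ℝ := unifSet (t0 +ᵥ (V : Set (F2 n))) with hTdef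
    have hTdist : IsDist T := aux_isDist_unifSet _ ⟨t0, hT0mem⟩
    have hg0 : ∀ v ∈ (V : Set (F2 n)),
        addDist (unifFin A) T v = (M:ℝ) * ((A.card:ℝ)⁻¹ * (N:ℝ)⁻¹) := by
      intro v hv
      have hstep : ∀ x, unifFin A x * T (v - x)
          = if (x ∈ A ∧ t0 + x ∈ (V : Set (F2 n))) then (A.card:ℝ)⁻¹ * (N:ℝ)⁻¹ else 0 := by
        intro x
        rw [hTdef]
        unfold unifFin unifSet
        rw [if_congr (hmemequiv t0 v hv x) rfl rfl]
        by_cases h1 : x ∈ A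
        · by_cases h2 : t0 + x ∈ (V : Set (F2 n))
          · rw [if_pos h1, if_pos h2, if_pos (⟨h1, h2⟩ : x ∈ A ∧ t0 + x ∈ (V : Set (F2 n))), hcardT]
          · rw [if_neg h2, if_neg (fun h : x ∈ A ∧ t0 + x ∈ (V : Set (F2 n)) => h2 h.2), mul_zero]
        · rw [if_neg h1, if_neg (fun h : x ∈ A ∧ t0 + x ∈ (V : Set (F2 n)) => h1 h.1), zero_mul]
      show (∑ x, unifFin A x * T (v - x)) = _
      rw [Finset.sum_congr rfl fun x _ => hstep x, aux_sum_if, aux_count A V t0, ← ht0]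
    refine iInf_le_of_le ⟨T, hTdist⟩ (le_of_eq ?_)
    have hcpos : (0:ℝ) < (M:ℝ) * ((A.card:ℝ)⁻¹ * (N:ℝ)⁻¹) := by positivity
    have hcond : ∀ x, addDist (unifFin A) T x = 0 → unifSet (V : Set (F2 n)) x = 0 := by
      intro x hx
      by_cases hxV : x ∈ (V : Set (F2 n))
      · exact absurd hx (by rw [hg0 x hxV]; exact hcpos.ne')
      · simp [unifSet, hxV]
    unfold KL
    rw [if_pos hcond]
    norm_cast
    rw [KLsum]
    have heval : ∀ x ∈ Vf, (N:ℝ)⁻¹ * Real.logb 2 ((N:ℝ)⁻¹ / addDist (unifFin A) T x)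
        = (N:ℝ)⁻¹ * (Real.logb 2 (A.card : ℝ) - Real.logb 2 (M : ℝ)) := by
      intro x hx
      rw [hg0 x ((memVf x).1 hx)]
      congr 1
      rw [show (N:ℝ)⁻¹ / ((M:ℝ) * ((A.card:ℝ)⁻¹ * (N:ℝ)⁻¹)) = (A.card:ℝ) / (M:ℝ) by
        field_simp]
      exact Real.logb_div haR.ne' hMR.ne'
    rw [Finset.sum_congr rfl heval, Finset.sum_const, hVfcard, nsmul_eq_mul]
    field_simp
  · -- lower bound
    refine le_iInf ?_
    rintro ⟨t, htd⟩
    by_cases hcond : ∀ x, addDist (unifFin A) t x = 0 → unifSet (V : Set (F2 n)) x = 0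
    swap
    · unfold KL
      rw [if_neg hcond]
      exact le_top
    unfold KL
    rw [if_pos hcond, EReal.coe_le_coe_iff, KLsum]
    set g : F2 n → ℝ := addDist (unifFin A) t with hgdef
    have hgnonneg : ∀ x, 0 ≤ g x := by
      intro x
      refine Finset.sum_nonneg fun y _ => mul_nonneg ?_ (htd.1 _)
      unfold unifFin
      split_ifs
      · positivity
      · exact le_refl 0
    have hgpos : ∀ v ∈ (V : Set (F2 n)), 0 < g v := by
      intro v hv
      rcases (hgnonneg v).lt_or_eq with h | h
      · exact h
      · exfalso
        have h0 : unifSet (V : Set (F2 n)) v = 0 := hcond v h.symm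
        rw [unifSet, if_pos hv] at h0
        exact (inv_pos.mpr (by rw [← hNdef] at *; exact hNR)).ne' (by rw [← hNdef] at h0; exact h0)
    have hVfne : Vf.Nonempty := ⟨0, (memVf 0).2 hVs0⟩
    -- the total mass of g on V is at most M/|A|
    have filterV : Finset.univ.filter (fun v : F2 n => v ∈ (V : Set (F2 n))) = Vf := by
      ext v; simp [hVfdef, Set.mem_toFinset]
    have inner : ∀ x : F2 n, (∑ v ∈ Vf, t (v - x))
        = ∑ w, (if w + x ∈ (V : Set (F2 n)) then t w else 0) := by
      intro x
      calc ∑ v ∈ Vf, t (v - x)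
          = ∑ v, (if v ∈ (V : Set (F2 n)) then t (v - x) else 0) := by
            rw [← filterV, Finset.sum_filter]
        _ = ∑ w, (if w + x ∈ (V : Set (F2 n)) then t w else 0) := by
            refine (Fintype.sum_equiv (Equiv.addRight x) _ _ fun w => ?_).symm
            simp [Equiv.addRight]
    have S_eq : (∑ v ∈ Vf, g v) = ∑ w, t w *
        (((Finset.univ.filter (fun x => x ∈ A ∧ w + x ∈ (V : Set (F2 n)))).card : ℝ)
          * (A.card : ℝ)⁻¹) := by
      calc ∑ v ∈ Vf, g v
          = ∑ v ∈ Vf, ∑ x, unifFin A x * t (v - x) := rfl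
        _ = ∑ x, ∑ v ∈ Vf, unifFin A x * t (v - x) := Finset.sum_comm
        _ = ∑ x, unifFin A x * ∑ v ∈ Vf, t (v - x) := by
            simp_rw [Finset.mul_sum]
        _ = ∑ x, ∑ w, unifFin A x * (if w + x ∈ (V : Set (F2 n)) then t w else 0) := by
            simp_rw [inner, Finset.mul_sum]
        _ = ∑ w, ∑ x, unifFin A x * (if w + x ∈ (V : Set (F2 n)) then t w else 0) :=
            Finset.sum_comm
        _ = ∑ w, t w * ∑ x, (if x ∈ A ∧ w + x ∈ (V : Set (F2 n)) then (A.card : ℝ)⁻¹ else 0) := by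
            refine Finset.sum_congr rfl fun w _ => ?_
            rw [Finset.mul_sum]
            refine Finset.sum_congr rfl fun x _ => ?_
            unfold unifFin
            by_cases h1 : x ∈ A
            · by_cases h2 : w + x ∈ (V : Set (F2 n))
              · rw [if_pos h1, if_pos h2, if_pos (⟨h1, h2⟩ : x ∈ A ∧ w + x ∈ (V : Set (F2 n)))]
                ring
              · rw [if_neg h2, if_neg (fun h : x ∈ A ∧ w + x ∈ (V : Set (F2 n)) => h2 h.2),
                  mul_zero, mul_zero]
            · rw [if_neg h1, if_neg (fun h : x ∈ A ∧ w + x ∈ (V : Set (F2 n)) => h1 h.1),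
                zero_mul, mul_zero]
        _ = ∑ w, t w *
            (((Finset.univ.filter (fun x => x ∈ A ∧ w + x ∈ (V : Set (F2 n)))).card : ℝ)
              * (A.card : ℝ)⁻¹) := by
            simp_rw [aux_sum_if]
    have hSle : (∑ v ∈ Vf, g v) ≤ (M : ℝ) * (A.card : ℝ)⁻¹ := by
      rw [S_eq]
      calc ∑ w, t w *
            (((Finset.univ.filter (fun x => x ∈ A ∧ w + x ∈ (V : Set (F2 n)))).card : ℝ)
              * (A.card : ℝ)⁻¹)
          ≤ ∑ w, t w * ((M : ℝ) * (A.card : ℝ)⁻¹) := by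
            refine Finset.sum_le_sum fun w _ => ?_
            refine mul_le_mul_of_nonneg_left ?_ (htd.1 w)
            refine mul_le_mul_of_nonneg_right ?_ (by positivity)
            exact_mod_cast hMto w
        _ = (M : ℝ) * (A.card : ℝ)⁻¹ := by rw [← Finset.sum_mul, htd.2, one_mul]
    have hSpos : (0:ℝ) < ∑ v ∈ Vf, g v :=
      Finset.sum_pos (fun v hv => hgpos v ((memVf v).1 hv)) hVfne
    -- Jensen's inequality for log
    have hsumw : ∑ _v ∈ Vf, (N:ℝ)⁻¹ = 1 := by
      rw [Finset.sum_const, hVfcard, nsmul_eq_mul]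
      exact mul_inv_cancel₀ hNR.ne'
    have jensen : ∑ v ∈ Vf, (N:ℝ)⁻¹ * Real.log (g v)
        ≤ Real.log ((N:ℝ)⁻¹ * ∑ v ∈ Vf, g v) := by
      have h := (strictConcaveOn_log_Ioi.concaveOn).le_map_sum
        (fun v _ => inv_nonneg.mpr hNR.le) hsumw
        (fun v hv => hgpos v ((memVf v).1 hv))
      simpa [smul_eq_mul, Finset.mul_sum] using h
    have hlog2 : (0:ℝ) < Real.log 2 := Real.log_pos one_lt_two
    have jensenb : ∑ v ∈ Vf, (N:ℝ)⁻¹ * Real.logb 2 (g v)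
        ≤ Real.logb 2 ((N:ℝ)⁻¹ * ∑ v ∈ Vf, g v) := by
      simp only [Real.logb]
      calc ∑ v ∈ Vf, (N:ℝ)⁻¹ * (Real.log (g v) / Real.log 2)
          = (∑ v ∈ Vf, (N:ℝ)⁻¹ * Real.log (g v)) / Real.log 2 := by
            rw [Finset.sum_div]
            exact Finset.sum_congr rfl fun v _ => by ring
        _ ≤ Real.log ((N:ℝ)⁻¹ * ∑ v ∈ Vf, g v) / Real.log 2 := by gcongr
    have hsum_eval : ∑ v ∈ Vf, (N:ℝ)⁻¹ * Real.logb 2 ((N:ℝ)⁻¹ / g v)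
        = Real.logb 2 (N:ℝ)⁻¹ - ∑ v ∈ Vf, (N:ℝ)⁻¹ * Real.logb 2 (g v) := by
      have h1 : ∀ v ∈ Vf, (N:ℝ)⁻¹ * Real.logb 2 ((N:ℝ)⁻¹ / g v)
          = (N:ℝ)⁻¹ * Real.logb 2 (N:ℝ)⁻¹ - (N:ℝ)⁻¹ * Real.logb 2 (g v) := by
        intro v hv
        rw [Real.logb_div (inv_ne_zero hNR.ne') (hgpos v ((memVf v).1 hv)).ne', mul_sub]
      rw [Finset.sum_congr rfl h1, Finset.sum_sub_distrib, Finset.sum_const, hVfcard,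
        nsmul_eq_mul, ← mul_assoc, mul_inv_cancel₀ hNR.ne', one_mul]
    have h3 : Real.logb 2 ((N:ℝ)⁻¹ * ∑ v ∈ Vf, g v)
        = Real.logb 2 (N:ℝ)⁻¹ + Real.logb 2 (∑ v ∈ Vf, g v) :=
      Real.logb_mul (inv_ne_zero hNR.ne') hSpos.ne'
    have h4 : Real.logb 2 (∑ v ∈ Vf, g v) ≤ Real.logb 2 ((M : ℝ) * (A.card : ℝ)⁻¹) :=
      Real.logb_le_logb_of_le one_lt_two hSpos hSle
    have h5 : Real.logb 2 ((M : ℝ) * (A.card : ℝ)⁻¹)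
        = Real.logb 2 (M : ℝ) - Real.logb 2 (A.card : ℝ) := by
      rw [Real.logb_mul hMR.ne' (inv_ne_zero haR.ne'), Real.logb_inv]
      ring
    rw [hsum_eval]
    linarith


end
end

section
/- Fix a nonempty finite set A ⊆ 𝔽₂ⁿ. For a linear subspace V ⊆ 𝔽₂ⁿ, τ⁺(U_V) = log₂|V| − log₂(max_{t ∈ 𝔽₂ⁿ} |A ∩ (V+t)|). -/
open scoped BigOperators Pointwise Classical

noncomputable section

/-!
Write `M = max_t |A ∩ (t + V)|`; the claim amounts to `τ⁻(U_V) = log |A| - log M`.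
For any `T`, the mass that `U_A + T` puts on `V` is `∑_y P(T = y) |A ∩ (V - y)| / |A| ≤ M / |A|`,
and Jensen's inequality for `log` gives `D_KL(U_V ‖ g) ≥ -log g(V)`; hence `τ⁻(U_V) ≥ log (|A| / M)`.
Equality is attained by `T` uniform on the coset `-t + V` for a maximising `t`: then `U_A + T` is
constant on `V`, equal to `M / (|A| |V|)`.
-/

open scoped Finset

section UniformKL

variable {α : Type*} [Fintype α]

lemma unifSet_eq_unifFin (S : Set α) : unifSet S = unifFin S.toFinset := by
  funext x
  simp [unifSet, unifFin]

lemma isDist_unifFin {A : Finset α} (hA : A.Nonempty) : IsDist (unifFin A) := by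
  refine ⟨fun x => by unfold unifFin; split_ifs <;> positivity, ?_⟩
  simp [unifFin, Finset.sum_ite_mem, hA.card_ne_zero]

lemma ent_unifFin (A : Finset α) : ent (unifFin A) = Real.logb 2 #A := by
  rcases A.eq_empty_or_nonempty with rfl | hA
  · simp [ent, unifFin]
  · simp only [ent, unifFin, apply_ite (fun p => -(p * Real.logb 2 p)), Real.logb_inv]
    simp [Finset.sum_ite_mem, hA.card_ne_zero]

lemma ent_unifSet (S : Set α) : ent (unifSet S) = Real.logb 2 (Nat.card S) := by
  rw [unifSet_eq_unifFin, ent_unifFin, Nat.card_eq_card_toFinset]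

lemma sum_unifFin_mul (S : Finset α) (φ : α → ℝ → ℝ) (hφ : ∀ x, φ x 0 = 0) :
    ∑ x, unifFin S x * φ x (unifFin S x) = ∑ x ∈ S, (#S : ℝ)⁻¹ * φ x (#S : ℝ)⁻¹ := by
  rw [← Finset.sum_subset S.subset_univ fun x _ hx => by simp [unifFin, hx, hφ]]
  exact Finset.sum_congr rfl fun x hx => by simp [unifFin, hx]

lemma KL_unifFin_of_eqOn {S : Finset α} {g : α → ℝ} {c : ℝ} (hc : 0 < c)
    (hg : ∀ x ∈ S, g x = c) :
    KL (unifFin S) g = ((-Real.logb 2 (#S * c) : ℝ) : EReal) := by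
  rcases S.eq_empty_or_nonempty with rfl | hS
  · simp [KL, unifFin]
  have hsupp : ∀ x, g x = 0 → unifFin S x = 0 := fun x hx => by
    by_cases h : x ∈ S
    · exact absurd (hg x h ▸ hx) hc.ne'
    · simp [unifFin, h]
  rw [KL, if_pos hsupp, EReal.coe_eq_coe_iff]
  calc ∑ x, unifFin S x * Real.logb 2 (unifFin S x / g x)
      = ∑ x ∈ S, (#S : ℝ)⁻¹ * Real.logb 2 ((#S : ℝ)⁻¹ / c) := by
        rw [sum_unifFin_mul S (fun x p => Real.logb 2 (p / g x)) (by simp)]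
        exact Finset.sum_congr rfl fun x hx => by rw [hg x hx]
    _ = -Real.logb 2 (#S * c) := by
        rw [Finset.sum_const, nsmul_eq_mul, ← mul_assoc,
          mul_inv_cancel₀ (by simp [hS.card_ne_zero]), one_mul, div_eq_mul_inv, ← mul_inv,
          Real.logb_inv]

lemma neg_logb_le_KL_unifFin {S : Finset α} {g : α → ℝ} {m : ℝ} (hS : S.Nonempty)
    (hg : ∀ x, 0 ≤ g x) (hm : ∑ x ∈ S, g x ≤ m) :
    ((-Real.logb 2 m : ℝ) : EReal) ≤ KL (unifFin S) g := by
  rw [KL]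
  split_ifs with hsupp
  case neg => exact le_top
  rw [EReal.coe_le_coe_iff]
  have hgpos : ∀ x ∈ S, 0 < g x := fun x hx =>
    (hg x).lt_of_ne fun h => by simpa [unifFin, hx, hS.card_ne_zero] using hsupp x h.symm
  have hS0 : (#S : ℝ) ≠ 0 := by simp [hS.card_ne_zero]
  have jensen : ∑ x ∈ S, (#S : ℝ)⁻¹ * Real.log (g x)
      ≤ Real.log ((#S : ℝ)⁻¹ * ∑ x ∈ S, g x) := by
    simpa [Finset.mul_sum] using strictConcaveOn_log_Ioi.concaveOn.le_map_sum
      (t := S) (w := fun _ => (#S : ℝ)⁻¹) (p := g) (fun _ _ => by positivity)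
      (by simp [hS0]) hgpos
  calc -Real.logb 2 m
      ≤ -Real.logb 2 (∑ x ∈ S, g x) :=
        neg_le_neg (Real.logb_le_logb_of_le one_lt_two (Finset.sum_pos hgpos hS) hm)
    _ = (-Real.log #S - Real.log ((#S : ℝ)⁻¹ * ∑ x ∈ S, g x)) / Real.log 2 := by
        rw [Real.log_mul (inv_ne_zero hS0) (Finset.sum_pos hgpos hS).ne', Real.log_inv,
          Real.logb]
        ring
    _ ≤ (-Real.log #S - ∑ x ∈ S, (#S : ℝ)⁻¹ * Real.log (g x)) / Real.log 2 := by
        gcongr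
    _ = ∑ x ∈ S, (#S : ℝ)⁻¹ * Real.logb 2 ((#S : ℝ)⁻¹ / g x) := by
        rw [Finset.sum_congr rfl fun x hx => show (#S : ℝ)⁻¹ * Real.logb 2 ((#S : ℝ)⁻¹ / g x)
            = (-((#S : ℝ)⁻¹ * Real.log #S) - (#S : ℝ)⁻¹ * Real.log (g x)) / Real.log 2 by
          rw [Real.logb, Real.log_div (inv_ne_zero hS0) (hgpos x hx).ne', Real.log_inv]; ring]
        rw [← Finset.sum_div, Finset.sum_sub_distrib, Finset.sum_const, nsmul_eq_mul, mul_neg,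
          ← mul_assoc, mul_inv_cancel₀ hS0, one_mul]
    _ = ∑ x, unifFin S x * Real.logb 2 (unifFin S x / g x) :=
        (sum_unifFin_mul S (fun x p => Real.logb 2 (p / g x)) (by simp)).symm

end UniformKL

lemma natCard_inter_vadd_eq_card_filter {G S : Type*} [AddGroup G] [SetLike S G]
    (A : Finset G) (V : S) (t : G) :
    Nat.card ↥((A : Set G) ∩ (t +ᵥ (V : Set G))) = #{a ∈ A | -t + a ∈ V} := by
  rw [← Set.ncard_coe_finset, ← Nat.card_coe_set_eq]
  congr! 2
  ext a
  simp [Set.mem_vadd_set_iff_neg_vadd_mem]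

section CosetIntersection

variable {G : Type*} [Fintype G] [AddGroup G] {S : Type*} [SetLike S G]

def maxCosetInter (A : Finset G) (V : S) : ℕ :=
  Finset.univ.sup fun t : G => Nat.card ↥((A : Set G) ∩ (t +ᵥ (V : Set G)))

lemma card_filter_add_mem_le_maxCosetInter (A : Finset G) (V : S) (y : G) :
    #{a ∈ A | y + a ∈ V} ≤ maxCosetInter A V := by
  have h := Finset.le_sup (f := fun t : G => Nat.card ↥((A : Set G) ∩ (t +ᵥ (V : Set G))))
    (Finset.mem_univ (-y))
  rwa [natCard_inter_vadd_eq_card_filter, neg_neg] at h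

lemma exists_card_filter_eq_maxCosetInter (A : Finset G) (V : S) :
    ∃ t : G, #{a ∈ A | -t + a ∈ V} = maxCosetInter A V := by
  obtain ⟨t, -, ht⟩ := Finset.exists_mem_eq_sup Finset.univ Finset.univ_nonempty
    fun t : G => Nat.card ↥((A : Set G) ∩ (t +ᵥ (V : Set G)))
  exact ⟨t, by rw [maxCosetInter, ht, natCard_inter_vadd_eq_card_filter]⟩

lemma maxCosetInter_pos [AddSubgroupClass S G] {A : Finset G} (hA : A.Nonempty) (V : S) :
    0 < maxCosetInter A V := by
  obtain ⟨a, ha⟩ := hA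
  refine (Finset.card_pos.2 ⟨a, ?_⟩).trans_le (card_filter_add_mem_le_maxCosetInter A V (-a))
  simp [ha, zero_mem]

lemma addDist_nonneg {f g : G → ℝ} (hf : ∀ x, 0 ≤ f x) (hg : ∀ x, 0 ≤ g x) (s : G) :
    0 ≤ addDist f g s :=
  Finset.sum_nonneg fun x _ => mul_nonneg (hf x) (hg _)

lemma addDist_unifFin_apply (A : Finset G) (t : G → ℝ) (x : G) :
    addDist (unifFin A) t x = (#A : ℝ)⁻¹ * ∑ a ∈ A, t (x - a) := by
  rw [Finset.mul_sum, addDist,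
    ← Finset.sum_subset A.subset_univ fun a _ ha => by simp [unifFin, ha]]
  exact Finset.sum_congr rfl fun a ha => by simp [unifFin, ha]

lemma sum_addDist_unifFin (A T : Finset G) (t : G → ℝ) :
    ∑ x ∈ T, addDist (unifFin A) t x = (#A : ℝ)⁻¹ * ∑ y, t y * #{a ∈ A | y + a ∈ T} := by
  have shift : ∀ a, ∑ x ∈ T, t (x - a) = ∑ y, if y + a ∈ T then t y else 0 := fun a => by
    rw [← Finset.sum_filter]
    exact Finset.sum_nbij' (· - a) (· + a) (by simp) (by simp) (by simp) (by simp) (by simp)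
  simp_rw [addDist_unifFin_apply, ← Finset.mul_sum, Finset.sum_comm (s := T), shift,
    Finset.sum_comm (s := A)]
  refine congrArg _ (Finset.sum_congr rfl fun y _ => ?_)
  rw [← Finset.sum_filter, Finset.sum_const, nsmul_eq_mul, mul_comm]

lemma sum_addDist_unifFin_le_maxCosetInter (A : Finset G) (V : S) {t : G → ℝ} (ht : IsDist t) :
    ∑ x ∈ (V : Set G).toFinset, addDist (unifFin A) t x ≤ maxCosetInter A V / #A := by
  rw [sum_addDist_unifFin, div_eq_inv_mul]
  gcongr
  calc ∑ y, t y * #{a ∈ A | y + a ∈ (V : Set G).toFinset}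
      ≤ ∑ y, t y * maxCosetInter A V := by
        gcongr with y
        · exact ht.1 y
        · simpa only [Set.mem_toFinset, SetLike.mem_coe] using
            card_filter_add_mem_le_maxCosetInter A V y
    _ = maxCosetInter A V := by rw [← Finset.sum_mul, ht.2, one_mul]

lemma logb_sub_logb_maxCosetInter_le_KL [AddSubgroupClass S G] {A : Finset G} (hA : A.Nonempty)
    (V : S) {t : G → ℝ} (ht : IsDist t) :
    ((Real.logb 2 #A - Real.logb 2 (maxCosetInter A V) : ℝ) : EReal)
      ≤ KL (unifSet (V : Set G)) (addDist (unifFin A) t) := by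
  have key := neg_logb_le_KL_unifFin ⟨0, by simp [zero_mem]⟩
    (addDist_nonneg (isDist_unifFin hA).1 ht.1) (sum_addDist_unifFin_le_maxCosetInter A V ht)
  have hM : (0 : ℝ) < maxCosetInter A V := by exact_mod_cast maxCosetInter_pos hA V
  rwa [Real.logb_div hM.ne' (by simp [hA.card_ne_zero]), neg_sub, ← unifSet_eq_unifFin] at key

end CosetIntersection

section CommGroup

variable {G : Type*} [Fintype G] [AddCommGroup G] {S : Type*} [SetLike S G]
  [AddSubgroupClass S G]

lemma addDist_unifFin_neg_vadd_apply (A : Finset G) (V : S) (t : G) {x : G} (hx : x ∈ V) :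
    addDist (unifFin A) (unifFin (-t +ᵥ (V : Set G).toFinset)) x
      = #{a ∈ A | -t + a ∈ V} / (#A * #(V : Set G).toFinset) := by
  have hmem : ∀ a, x - a ∈ -t +ᵥ (V : Set G).toFinset ↔ -t + a ∈ V := fun a => by
    rw [Finset.mem_neg_vadd_finset_iff, Set.mem_toFinset, SetLike.mem_coe, vadd_eq_add,
      show t + (x - a) = x + -(-t + a) by abel, add_mem_cancel_left hx, neg_mem_iff]
  rw [addDist_unifFin_apply]
  simp only [unifFin, hmem, Finset.card_vadd_finset]
  rw [← Finset.sum_filter, Finset.sum_const, nsmul_eq_mul]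
  field_simp

lemma KL_unifSet_addDist_unifFin_neg_vadd {A : Finset G} (hA : A.Nonempty) (V : S) {t : G}
    (ht : #{a ∈ A | -t + a ∈ V} = maxCosetInter A V) :
    KL (unifSet (V : Set G)) (addDist (unifFin A) (unifFin (-t +ᵥ (V : Set G).toFinset)))
      = ((Real.logb 2 #A - Real.logb 2 (maxCosetInter A V) : ℝ) : EReal) := by
  have hA0 : (0 : ℝ) < #A := by exact_mod_cast hA.card_pos
  have hV0 : (0 : ℝ) < #(V : Set G).toFinset := by
    exact_mod_cast Finset.card_pos.2 ⟨0, by simp [zero_mem]⟩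
  have hM : (0 : ℝ) < maxCosetInter A V := by exact_mod_cast maxCosetInter_pos hA V
  have hc : (#(V : Set G).toFinset : ℝ) * (maxCosetInter A V / (#A * #(V : Set G).toFinset))
      = maxCosetInter A V / #A := by
    field_simp
  rw [unifSet_eq_unifFin,
    KL_unifFin_of_eqOn (c := maxCosetInter A V / (#A * #(V : Set G).toFinset)) (by positivity)
      fun x hx => by
        rw [addDist_unifFin_neg_vadd_apply A V t (by simpa using hx), ht],
    hc, Real.logb_div hM.ne' hA0.ne', neg_sub]

theorem iInf_KL_unifSet_addDist_unifFin {A : Finset G} (hA : A.Nonempty) (V : S) :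
    ⨅ t : {t : G → ℝ // IsDist t}, KL (unifSet (V : Set G)) (addDist (unifFin A) t.1)
      = ((Real.logb 2 #A - Real.logb 2 (maxCosetInter A V) : ℝ) : EReal) := by
  obtain ⟨t, ht⟩ := exists_card_filter_eq_maxCosetInter A V
  have hcoset : (-t +ᵥ (V : Set G).toFinset).Nonempty :=
    Finset.Nonempty.vadd_finset ⟨0, by simp [zero_mem]⟩
  exact le_antisymm
    (iInf_le_of_le ⟨_, isDist_unifFin hcoset⟩ (KL_unifSet_addDist_unifFin_neg_vadd hA V ht).le)
    (le_iInf fun t => logb_sub_logb_maxCosetInter_le_KL hA V t.2)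

end CommGroup

/-- for a nonempty finite `A ⊆ 𝔽₂ⁿ` and a linear subspace `V`,
`τ⁺(U_V) = log₂|V| − log₂(max_t |A ∩ (V+t)|)`. -/
theorem stmt_13 (n : ℕ) (A : Finset (F2 n)) (hA : A.Nonempty)
    (V : Submodule (ZMod 2) (F2 n)) :
    tauPlus A (unifSet (V : Set (F2 n)))
      = ((Real.logb 2 (Nat.card V : ℝ)
          - Real.logb 2 ((Finset.univ.sup fun t : F2 n =>
              Nat.card ↥((A : Set (F2 n)) ∩ (t +ᵥ (V : Set (F2 n)))) : ℕ) : ℝ) : ℝ)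
        : EReal) := by
  rw [tauPlus, tauMinus, iInf_KL_unifSet_addDist_unifFin hA V, ent_unifSet, ent_unifFin,
    SetLike.coe_sort_coe, ← EReal.coe_add, EReal.coe_eq_coe_iff, maxCosetInter]
  ring

end
end

section
/- Fix a nonempty finite set A ⊆ 𝔽₂ⁿ. For any jointly distributed (X, Z) with X taking values in 𝔽₂ⁿ: τ⁻(X | Z) ≤ τ⁻(X) + H(X) − H(X|Z). -/
open scoped BigOperators Pointwise Classical

noncomputable section

/-! ### Auxiliary lemmas -/

lemma my_coe_sum {ι : Type*} (s : Finset ι) (f : ι → ℝ) :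
    ((∑ i ∈ s, f i : ℝ) : EReal) = ∑ i ∈ s, ((f i : ℝ) : EReal) := by
  induction s using Finset.cons_induction with
  | empty => simp
  | cons a s ha ih => rw [Finset.sum_cons, Finset.sum_cons, EReal.coe_add, ih]

lemma my_sum_unifFin {α : Type*} [Fintype α] (A : Finset α) (hA : A.Nonempty) :
    ∑ x, unifFin A x = 1 := by
  have hcard : (A.card : ℝ) ≠ 0 := by
    simp [Finset.card_ne_zero_of_mem hA.choose_spec]
  simp only [unifFin, Finset.sum_ite_mem, Finset.univ_inter, Finset.sum_const,
    nsmul_eq_mul]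
  field_simp

lemma my_unifFin_nonneg {α : Type*} [Fintype α] (A : Finset α) (x : α) :
    0 ≤ unifFin A x := by
  unfold unifFin
  split <;> positivity

lemma my_addDist_nonneg {α : Type*} [Fintype α] [AddGroup α] {f g : α → ℝ}
    (hf : ∀ x, 0 ≤ f x) (hg : ∀ x, 0 ≤ g x) (s : α) : 0 ≤ addDist f g s :=
  Finset.sum_nonneg fun x _ => mul_nonneg (hf x) (hg _)

lemma my_addDist_sum {α : Type*} [Fintype α] [AddGroup α] {f g : α → ℝ}
    (hf : ∑ x, f x = 1) (hg : ∑ x, g x = 1) : ∑ s, addDist f g s = 1 := by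
  unfold addDist
  rw [Finset.sum_comm]
  have : ∀ x : α, ∑ s : α, f x * g (s - x) = f x := by
    intro x
    rw [← Finset.mul_sum]
    have : ∑ s : α, g (s - x) = ∑ s : α, g s := by
      exact Fintype.sum_equiv (Equiv.subRight x) _ _ fun s => rfl
    rw [this, hg, mul_one]
  simp only [this, hf]

lemma my_KL_nonneg {α : Type*} [Fintype α] {f g : α → ℝ}
    (hf0 : ∀ x, 0 ≤ f x) (hf1 : (∑ x, f x = 1) ∨ (∀ x, f x = 0))
    (hg0 : ∀ x, 0 ≤ g x) (hg1 : ∑ x, g x ≤ 1) : 0 ≤ KL f g := by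
  unfold KL
  split
  case isFalse => exact le_top
  case isTrue hsupp =>
    rw [← EReal.coe_zero, EReal.coe_le_coe_iff]
    rcases hf1 with hf1 | hf1
    · -- Gibbs' inequality
      have key : ∀ x, f x - g x ≤ f x * Real.log (f x / g x) := by
        intro x
        rcases eq_or_lt_of_le (hf0 x) with h0 | h0
        · simp [← h0, neg_nonpos, hg0 x]
        · have hgx : 0 < g x := by
            rcases eq_or_lt_of_le (hg0 x) with h1 | h1
            · exact absurd (hsupp x h1.symm) (ne_of_gt h0)
            · exact h1
          have hlog : Real.log (g x / f x) ≤ g x / f x - 1 :=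
            Real.log_le_sub_one_of_pos (div_pos hgx h0)
          have hlogdiv : Real.log (f x / g x) = - Real.log (g x / f x) := by
            rw [← Real.log_inv, inv_div]
          have : 1 - g x / f x ≤ Real.log (f x / g x) := by
            rw [hlogdiv]; linarith
          have := mul_le_mul_of_nonneg_left this (le_of_lt h0)
          calc f x - g x = f x * (1 - g x / f x) := by field_simp
            _ ≤ f x * Real.log (f x / g x) := this
      have h1 : (1 : ℝ) - ∑ x, g x ≤ ∑ x, f x * Real.log (f x / g x) := by
        rw [← hf1, ← Finset.sum_sub_distrib]
        exact Finset.sum_le_sum fun x _ => key x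
      have h2 : 0 ≤ ∑ x, f x * Real.log (f x / g x) := by linarith
      have : ∑ x, f x * Real.logb 2 (f x / g x)
          = (∑ x, f x * Real.log (f x / g x)) / Real.log 2 := by
        rw [Finset.sum_div]
        refine Finset.sum_congr rfl fun x _ => ?_
        rw [Real.logb, mul_div_assoc]
      rw [this]
      positivity
    · simp [hf1]

section CondFacts

variable {α γ : Type*} [Fintype α] [Fintype γ]

lemma my_margSnd_nonneg {π : α × γ → ℝ} (hπ0 : ∀ q, 0 ≤ π q) (z : γ) :
    0 ≤ margSnd π z :=
  Finset.sum_nonneg fun a _ => hπ0 (a, z)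

lemma my_condDist_nonneg {π : α × γ → ℝ} (hπ0 : ∀ q, 0 ≤ π q) (z : γ) (x : α) :
    0 ≤ condDist π z x :=
  div_nonneg (hπ0 (x, z)) (my_margSnd_nonneg hπ0 z)

lemma my_pi_eq_zero {π : α × γ → ℝ} (hπ0 : ∀ q, 0 ≤ π q) {z : γ}
    (hz : margSnd π z = 0) (x : α) : π (x, z) = 0 := by
  have := (Finset.sum_eq_zero_iff_of_nonneg (fun a _ => hπ0 (a, z))).mp hz
  exact this x (Finset.mem_univ x)

lemma my_margSnd_mul_condDist {π : α × γ → ℝ} (hπ0 : ∀ q, 0 ≤ π q) (z : γ) (x : α) :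
    margSnd π z * condDist π z x = π (x, z) := by
  by_cases hz : margSnd π z = 0
  · rw [hz, zero_mul, my_pi_eq_zero hπ0 hz x]
  · rw [condDist, mul_div_cancel₀ _ hz]

lemma my_condDist_cases {π : α × γ → ℝ} (hπ0 : ∀ q, 0 ≤ π q) (z : γ) :
    (∑ x, condDist π z x = 1) ∨ (∀ x, condDist π z x = 0) := by
  by_cases hz : margSnd π z = 0
  · right; intro x; rw [condDist, hz, div_zero]
  · left
    unfold condDist
    rw [← Finset.sum_div]
    exact div_self hz

lemma my_margFst_eq_sum (π : α × γ → ℝ) (x : α) :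
    margFst π x = ∑ z, π (x, z) := rfl

lemma my_margFst_pos_of_pi {π : α × γ → ℝ} (hπ0 : ∀ q, 0 ≤ π q) {x : α} {z : γ}
    (h : 0 < π (x, z)) : 0 < margFst π x :=
  lt_of_lt_of_le h (Finset.single_le_sum (fun w _ => hπ0 (x, w)) (Finset.mem_univ z))

/-- The key identity: `E_z KL(X|_z ‖ g) = KL(X ‖ g) + H(X) - H(X|Z)` (all
divergences written as plain sums, under the support condition). -/
lemma my_key_identity (π : α × γ → ℝ) (hπ : IsDist π) (g : α → ℝ)
    (hg : ∀ x, g x = 0 → margFst π x = 0) :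
    ∑ z, margSnd π z * (∑ x, condDist π z x * Real.logb 2 (condDist π z x / g x))
      = (∑ x, margFst π x * Real.logb 2 (margFst π x / g x))
        + ent (margFst π) - condEnt π := by
  have hπ0 := hπ.1
  -- termwise identity for the left side
  have step1 : ∀ z x, margSnd π z * (condDist π z x * Real.logb 2 (condDist π z x / g x))
      = π (x, z) * Real.logb 2 (condDist π z x) - π (x, z) * Real.logb 2 (g x) := by
    intro z x
    rcases eq_or_lt_of_le (hπ0 (x, z)) with h0 | h0
    · have hc : condDist π z x = 0 := by rw [condDist, ← h0, zero_div]
      rw [hc, ← h0]; ring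
    · have hpz : 0 < margSnd π z :=
        lt_of_lt_of_le h0 (Finset.single_le_sum (fun a _ => hπ0 (a, z)) (Finset.mem_univ x))
      have hc : 0 < condDist π z x := div_pos h0 hpz
      have hgx : g x ≠ 0 := by
        intro h
        exact absurd (hg x h) (ne_of_gt (my_margFst_pos_of_pi hπ0 h0))
      have hpc := my_margSnd_mul_condDist hπ0 z x
      rw [Real.logb_div (ne_of_gt hc) hgx]
      calc margSnd π z * (condDist π z x * (Real.logb 2 (condDist π z x) - Real.logb 2 (g x)))
          = (margSnd π z * condDist π z x) * Real.logb 2 (condDist π z x)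
            - (margSnd π z * condDist π z x) * Real.logb 2 (g x) := by ring
        _ = _ := by rw [hpc]
  have step2 : ∀ z x, margSnd π z * (-(condDist π z x * Real.logb 2 (condDist π z x)))
      = -(π (x, z) * Real.logb 2 (condDist π z x)) := by
    intro z x
    have hpc := my_margSnd_mul_condDist hπ0 z x
    calc margSnd π z * (-(condDist π z x * Real.logb 2 (condDist π z x)))
        = -((margSnd π z * condDist π z x) * Real.logb 2 (condDist π z x)) := by ring
      _ = _ := by rw [hpc]
  have step3 : ∀ x, margFst π x * Real.logb 2 (margFst π x / g x)
      + (-(margFst π x * Real.logb 2 (margFst π x)))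
      = -(margFst π x * Real.logb 2 (g x)) := by
    intro x
    rcases eq_or_lt_of_le (Finset.sum_nonneg (fun z _ => hπ0 (x, z)) :
        (0:ℝ) ≤ margFst π x) with h0 | h0
    · have hf0 : margFst π x = 0 := h0.symm
      rw [hf0]; ring
    · have h0 : (0:ℝ) < margFst π x := h0
      have hgx : g x ≠ 0 := fun h => absurd (hg x h) (ne_of_gt h0)
      rw [Real.logb_div (ne_of_gt h0) hgx]; ring
  -- abbreviations
  set A1 : ℝ := ∑ z, ∑ x, π (x, z) * Real.logb 2 (condDist π z x) with hA1
  set A2 : ℝ := ∑ z, ∑ x, π (x, z) * Real.logb 2 (g x) with hA2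
  have hLHS : ∑ z, margSnd π z *
      (∑ x, condDist π z x * Real.logb 2 (condDist π z x / g x)) = A1 - A2 := by
    rw [hA1, hA2, ← Finset.sum_sub_distrib]
    refine Finset.sum_congr rfl fun z _ => ?_
    rw [Finset.mul_sum, ← Finset.sum_sub_distrib]
    exact Finset.sum_congr rfl fun x _ => step1 z x
  have hCondEnt : condEnt π = -A1 := by
    rw [condEnt, hA1, ← Finset.sum_neg_distrib]
    refine Finset.sum_congr rfl fun z _ => ?_
    rw [ent, Finset.mul_sum, ← Finset.sum_neg_distrib]
    exact Finset.sum_congr rfl fun x _ => step2 z x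
  have hA2' : A2 = ∑ x, margFst π x * Real.logb 2 (g x) := by
    rw [hA2, Finset.sum_comm]
    refine Finset.sum_congr rfl fun x _ => ?_
    rw [my_margFst_eq_sum, Finset.sum_mul]
  have hKE : (∑ x, margFst π x * Real.logb 2 (margFst π x / g x)) + ent (margFst π)
      = -A2 := by
    rw [ent, ← Finset.sum_add_distrib, hA2', ← Finset.sum_neg_distrib]
    exact Finset.sum_congr rfl fun x _ => step3 x
  rw [hLHS, hCondEnt]
  linarith [hKE]

end CondFacts

lemma my_tauMinus_ne_top {n : ℕ} (A : Finset (F2 n)) (hA : A.Nonempty)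
    (f : F2 n → ℝ) : tauMinus A f ≠ ⊤ := by
  have hcard : (0:ℝ) < (Fintype.card (F2 n) : ℝ) := by
    exact_mod_cast Fintype.card_pos
  set t0 : F2 n → ℝ := fun _ => (Fintype.card (F2 n) : ℝ)⁻¹ with ht0
  have ht0d : IsDist t0 := by
    constructor
    · intro x; positivity
    · simp only [ht0, Finset.sum_const, nsmul_eq_mul, Finset.card_univ]
      field_simp
  have hg : ∀ x, addDist (unifFin A) t0 x = (Fintype.card (F2 n) : ℝ)⁻¹ := by
    intro x
    unfold addDist
    simp only [ht0]
    rw [← Finset.sum_mul, my_sum_unifFin A hA, one_mul]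
  have hKL : KL f (addDist (unifFin A) t0) ≠ ⊤ := by
    unfold KL
    have hcond : ∀ x, addDist (unifFin A) t0 x = 0 → f x = 0 := by
      intro x hx
      rw [hg x] at hx
      exact absurd hx (by positivity)
    rw [if_pos hcond]
    exact EReal.coe_ne_top _
  intro h
  have := iInf_le (fun t : {t : F2 n → ℝ // IsDist t} =>
    KL f (addDist (unifFin A) t.1)) ⟨t0, ht0d⟩
  rw [tauMinus] at h
  rw [h] at this
  exact hKL (top_le_iff.mp this)

lemma my_tauMinus_nonneg {n : ℕ} (A : Finset (F2 n)) (hA : A.Nonempty)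
    {f : F2 n → ℝ} (hf0 : ∀ x, 0 ≤ f x)
    (hf1 : (∑ x, f x = 1) ∨ (∀ x, f x = 0)) : 0 ≤ tauMinus A f := by
  refine le_iInf fun t => ?_
  refine my_KL_nonneg hf0 hf1
    (fun x => my_addDist_nonneg (my_unifFin_nonneg A) (fun y => t.2.1 y) x) ?_
  rw [my_addDist_sum (my_sum_unifFin A hA) t.2.2]

/-- for jointly distributed `(X, Z)` (joint distribution `π`) with `X`
valued in `𝔽₂ⁿ`, `τ⁻(X | Z) ≤ τ⁻(X) + H(X) − H(X|Z)`, where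
`τ⁻(X|Z) = E_{z∼Z} τ⁻(X|_{Z=z})`. -/
theorem stmt_16 (n : ℕ) (A : Finset (F2 n)) (hA : A.Nonempty)
    (S : Type) [Fintype S] (π : F2 n × S → ℝ) (hπ : IsDist π) :
    (∑ z, (margSnd π z : EReal) * tauMinus A (condDist π z))
      ≤ tauMinus A (margFst π) + ((ent (margFst π) - condEnt π : ℝ) : EReal) := by
  have hπ0 := hπ.1
  have hf0 : ∀ x, 0 ≤ margFst π x :=
    fun x => Finset.sum_nonneg fun z _ => hπ0 (x, z)
  have hf1 : ∑ x, margFst π x = 1 := by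
    rw [← hπ.2, Fintype.sum_prod_type]
    rfl
  -- each conditional tauMinus is a finite nonnegative extended real
  have hτ0 : ∀ z, 0 ≤ tauMinus A (condDist π z) := fun z =>
    my_tauMinus_nonneg A hA (my_condDist_nonneg hπ0 z) (my_condDist_cases hπ0 z)
  have hτtop : ∀ z, tauMinus A (condDist π z) ≠ ⊤ :=
    fun z => my_tauMinus_ne_top A hA _
  have hτbot : ∀ z, tauMinus A (condDist π z) ≠ ⊥ := by
    intro z h
    have := hτ0 z
    rw [h] at this
    exact absurd this (by simp)
  set r : S → ℝ := fun z => (tauMinus A (condDist π z)).toReal with hr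
  have hrz : ∀ z, ((r z : ℝ) : EReal) = tauMinus A (condDist π z) :=
    fun z => EReal.coe_toReal (hτtop z) (hτbot z)
  -- tauMinus of the marginal is finite
  have hI0 : 0 ≤ tauMinus A (margFst π) :=
    my_tauMinus_nonneg A hA hf0 (Or.inl hf1)
  have hItop : tauMinus A (margFst π) ≠ ⊤ := my_tauMinus_ne_top A hA _
  have hIbot : tauMinus A (margFst π) ≠ ⊥ := by
    intro h; rw [h] at hI0; exact absurd hI0 (by simp)
  set rI : ℝ := (tauMinus A (margFst π)).toReal with hrI
  have hrIeq : ((rI : ℝ) : EReal) = tauMinus A (margFst π) :=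
    EReal.coe_toReal hItop hIbot
  -- rewrite both sides as coercions of reals
  have hL : (∑ z, (margSnd π z : EReal) * tauMinus A (condDist π z))
      = ((∑ z, margSnd π z * r z : ℝ) : EReal) := by
    rw [my_coe_sum]
    refine Finset.sum_congr rfl fun z _ => ?_
    rw [EReal.coe_mul, hrz z]
  rw [hL, ← hrIeq, ← EReal.coe_add, EReal.coe_le_coe_iff]
  -- real goal
  refine le_of_forall_pos_le_add fun ε hε => ?_
  have hlt : tauMinus A (margFst π) < ((rI + ε : ℝ) : EReal) := by
    rw [← hrIeq, EReal.coe_lt_coe_iff]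
    linarith
  rw [tauMinus, iInf_lt_iff] at hlt
  obtain ⟨t, ht⟩ := hlt
  set g : F2 n → ℝ := addDist (unifFin A) t.1 with hgdef
  by_cases hsupp : ∀ x, g x = 0 → margFst π x = 0
  · have hKLf : KL (margFst π) g = ((∑ x, margFst π x *
        Real.logb 2 (margFst π x / g x) : ℝ) : EReal) := by
      rw [KL, if_pos hsupp]
    rw [hKLf, EReal.coe_lt_coe_iff] at ht
    -- support condition for each conditional
    have hsuppz : ∀ z x, g x = 0 → condDist π z x = 0 := by
      intro z x hx
      have hfx : margFst π x = 0 := hsupp x hx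
      have hπx : π (x, z) = 0 := by
        have := (Finset.sum_eq_zero_iff_of_nonneg
          (fun w _ => hπ0 (x, w))).mp hfx
        exact this z (Finset.mem_univ z)
      rw [condDist, hπx, zero_div]
    -- per-z bound
    have hzb : ∀ z, r z ≤ ∑ x, condDist π z x * Real.logb 2 (condDist π z x / g x) := by
      intro z
      have h1 : tauMinus A (condDist π z) ≤ KL (condDist π z) g :=
        iInf_le (fun t' : {t' : F2 n → ℝ // IsDist t'} =>
          KL (condDist π z) (addDist (unifFin A) t'.1)) t
      have h2 : KL (condDist π z) g = ((∑ x, condDist π z x *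
          Real.logb 2 (condDist π z x / g x) : ℝ) : EReal) := by
        rw [KL, if_pos (hsuppz z)]
      rw [h2, ← hrz z, EReal.coe_le_coe_iff] at h1
      exact h1
    have hsum : ∑ z, margSnd π z * r z
        ≤ ∑ z, margSnd π z * (∑ x, condDist π z x *
            Real.logb 2 (condDist π z x / g x)) :=
      Finset.sum_le_sum fun z _ =>
        mul_le_mul_of_nonneg_left (hzb z) (my_margSnd_nonneg hπ0 z)
    have hid := my_key_identity π hπ g hsupp
    rw [hid] at hsum
    linarith
  · rw [KL, if_neg hsupp] at ht
    exact absurd ht (not_top_lt)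

end
end
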